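/- arXiv:1504.00048 — 4 statements merged into one kernel-verified Lean document; each statement's English description precedes it below -/
import Mathlib

section
/- Let σ:Σ→Σ be a topological Markov shift and r:Σ→(0,∞) a Hölder continuous roof function bounded away from zero and infinity. Then the Bowen–Walters function d_1 (defined as the infimum of lengths of basic paths) is a metric on the unit suspension space Σ_1 = {(x,t) : x∈Σ, 0≤t<1}, and consequently d_r(z,w) := d_1(ϑ_r(z),ϑ_r(w)), where ϑ_r(x,t) = (x, t/r(x)), is a metric on Σ_r = {(x,t) : x∈Σ, 0≤t<r(x)}. -/
/-!
Basic paths can be reversed and concatenated, so `d1` is a pseudometric, and the point is that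
`d1 z w = 0` forces `z = w`. Every map on `Σ₁` whose increments along horizontal segments and
along flow lines are bounded by their lengths is `1`-Lipschitz for `d1`. The height, read in
`ℝ/ℤ`, is such a map; so are the lifts of the weighted coordinate indicators
`x ↦ exp (-|n|) [x_n = v]`, interpolated along each orbit either linearly between consecutive
points or by a tent vanishing on the base. At height `0` the linear lifts and at heights in
`(0, 1)` the tent lifts recover every coordinate, so these maps separate points. Since `ϑ_r` is
injective, `d_r` is then a metric too.
-/

open MeasureTheory Filter Set
open scoped Classical

structure MarkovGraph where
  V : Type
  E : V → V → Prop
  countableV : Countable V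
  in_edge : ∀ v, ∃ u, E u v
  out_edge : ∀ v, ∃ w, E v w

namespace MarkovGraph

variable (G : MarkovGraph)

/-- The two-sided path space of the graph. -/
def Space : Type := {x : ℤ → G.V // ∀ i, G.E (x i) (x (i + 1))}

/-- The left shift, as a bijection of the path space. -/
def shift : Equiv.Perm G.Space where
  toFun x := ⟨fun i => x.1 (i + 1), fun i => x.2 (i + 1)⟩
  invFun x := ⟨fun i => x.1 (i - 1), fun i => by
    have h := x.2 (i - 1)
    have e1 : i - 1 + 1 = i + 1 - 1 := by ring
    rwa [e1] at h⟩
  left_inv x := Subtype.ext (funext fun i => by simp)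
  right_inv x := Subtype.ext (funext fun i => by simp)

/-- The metric d(x,y) = exp(-min{|n| : x_n ≠ y_n}). -/
noncomputable def dist0 (x y : G.Space) : ℝ :=
  if x = y then 0
  else Real.exp (-(sInf {t : ℝ | ∃ n : ℤ, x.1 n ≠ y.1 n ∧ t = |(n : ℝ)|}))

/-- Hölder continuity with respect to `dist0`. -/
def HolderFun (f : G.Space → ℝ) : Prop :=
  ∃ C : ℝ, 0 < C ∧ ∃ α : ℝ, 0 < α ∧ α ≤ 1 ∧ ∀ x y, |f x - f y| ≤ C * dist0 G x y ^ α

/-- Birkhoff sums `r_n` for `n : ℤ`. -/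
noncomputable def birkhoff (r : G.Space → ℝ) (n : ℤ) (x : G.Space) : ℝ :=
  if 0 ≤ n then ∑ i ∈ Finset.range n.toNat, r ((G.shift ^ (i : ℤ)) x)
  else -∑ i ∈ Finset.range (-n).toNat, r ((G.shift ^ ((i : ℤ) - (-n).toNat)) x)

/-- The suspension space Σ_r = {(x,t) : 0 ≤ t < r(x)}. -/
def Susp (r : G.Space → ℝ) : Type := {p : G.Space × ℝ // 0 ≤ p.2 ∧ p.2 < r p.1}

/-- Defining property of the topological Markov flow with roof `r`. -/
def IsTMFlow (r : G.Space → ℝ) (Φ : ℝ → G.Susp r → G.Susp r) : Prop :=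
  ∀ τ p, ∃ n : ℤ, ((Φ τ p).1.1 = (G.shift ^ n) p.1.1) ∧
    ((Φ τ p).1.2 = p.1.2 + τ - birkhoff G r n p.1.1)

end MarkovGraph
namespace MarkovGraph

variable (G : MarkovGraph)

/-- The unit-roof suspension flow ψ on Σ_1. -/
noncomputable def unitFlow (t : ℝ) (p : G.Susp (fun _ => (1 : ℝ))) :
    G.Susp (fun _ => (1 : ℝ)) :=
  ⟨((G.shift ^ ⌊p.1.2 + t⌋) p.1.1, Int.fract (p.1.2 + t)),
    Int.fract_nonneg _, Int.fract_lt_one _⟩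

/-- Horizontal segments: ordered pairs with the same height. -/
def IsHoriz (z w : G.Susp (fun _ => (1 : ℝ))) : Prop := z.1.2 = w.1.2

/-- Length of a horizontal segment. -/
noncomputable def horizLength (z w : G.Susp (fun _ => (1 : ℝ))) : ℝ :=
  (1 - z.1.2) * dist0 G z.1.1 w.1.1 + z.1.2 * dist0 G (G.shift z.1.1) (G.shift w.1.1)

/-- Vertical segments: ordered pairs lying on the same flow line. -/
def IsVert (z w : G.Susp (fun _ => (1 : ℝ))) : Prop := ∃ t : ℝ, unitFlow G t z = w

/-- Length of a vertical segment: min{|t| > 0 : ψ^t(z) = w}. -/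
noncomputable def vertLength (z w : G.Susp (fun _ => (1 : ℝ))) : ℝ :=
  sInf {s : ℝ | 0 < s ∧ ∃ t : ℝ, |t| = s ∧ unitFlow G t z = w}

/-- `PathLen z w ℓ` holds iff there is a basic path from `z` to `w` of length `ℓ`. -/
inductive PathLen : G.Susp (fun _ => (1 : ℝ)) → G.Susp (fun _ => (1 : ℝ)) → ℝ → Prop
  | horiz {z w} (h : IsHoriz G z w) : PathLen z w (horizLength G z w)
  | vert {z w} (h : IsVert G z w) : PathLen z w (vertLength G z w)
  | comp {z w u : G.Susp (fun _ => (1 : ℝ))} {a b : ℝ} :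
      PathLen z w a → PathLen w u b → PathLen z u (a + b)

/-- The Bowen–Walters function d_1 : infimum of lengths of basic paths. -/
noncomputable def d1 (z w : G.Susp (fun _ => (1 : ℝ))) : ℝ :=
  sInf {ℓ : ℝ | PathLen G z w ℓ}

/-- The canonical map ϑ_r : Σ_r → Σ_1, ϑ_r(x,t) = (x, t/r(x)). -/
noncomputable def thetaR (r : G.Space → ℝ) (p : G.Susp r) : G.Susp (fun _ => (1 : ℝ)) :=
  if h : 0 < r p.1.1 then
    ⟨(p.1.1, p.1.2 / r p.1.1), div_nonneg p.2.1 h.le, (div_lt_one h).2 p.2.2⟩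
  else ⟨(p.1.1, 0), by norm_num⟩

/-- The Bowen–Walters function d_r on Σ_r. -/
noncomputable def dr (r : G.Space → ℝ) (z w : G.Susp r) : ℝ :=
  d1 G (thetaR G r z) (thetaR G r w)

end MarkovGraph

/-- `d` is a metric on `X`. -/
def IsMetricOn {X : Type*} (d : X → X → ℝ) : Prop :=
  (∀ z w, 0 ≤ d z w) ∧ (∀ z w, d z w = 0 ↔ z = w) ∧ (∀ z w, d z w = d w z) ∧
    ∀ z w u, d z u ≤ d z w + d w u

theorem IsMetricOn.comp_injective {X Y : Type*} {d : X → X → ℝ} (hd : IsMetricOn d)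
    {f : Y → X} (hf : Function.Injective f) : IsMetricOn fun a b => d (f a) (f b) :=
  ⟨fun _ _ => hd.1 _ _, fun _ _ => (hd.2.1 _ _).trans hf.eq_iff, fun _ _ => hd.2.2.1 _ _,
    fun _ _ _ => hd.2.2.2 _ _ _⟩

theorem lipschitzWith_one_of_floor_cells {f : ℝ → ℝ} (hrange : ∀ s s', |f s - f s'| ≤ 1)
    (hcell : ∀ s s', ⌊s⌋ = ⌊s'⌋ → |f s - f s'| ≤ |s - s'|)
    (hright : ∀ s, |f s - f (⌊s⌋ + 1)| ≤ ⌊s⌋ + 1 - s) : LipschitzWith 1 f := by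
  refine LipschitzWith.of_dist_le_mul fun s s' => ?_
  rw [NNReal.coe_one, one_mul, Real.dist_eq, Real.dist_eq]
  wlog hss' : s ≤ s' generalizing s s'
  · rw [abs_sub_comm, abs_sub_comm s]
    exact this s' s (le_of_not_ge hss')
  have hfloor : ⌊s⌋ ≤ ⌊s'⌋ := Int.floor_mono hss'
  obtain heq | hnext | hfar : ⌊s'⌋ = ⌊s⌋ ∨ ⌊s'⌋ = ⌊s⌋ + 1 ∨ ⌊s⌋ + 2 ≤ ⌊s'⌋ := by omega
  · exact hcell s s' heq.symm
  · have hmid : ⌊((⌊s⌋ + 1 : ℤ) : ℝ)⌋ = ⌊s'⌋ := by rw [Int.floor_intCast, hnext]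
    have hmid_le : ((⌊s⌋ + 1 : ℤ) : ℝ) ≤ s' := hnext ▸ Int.floor_le s'
    push_cast at hmid hmid_le
    calc |f s - f s'| ≤ |f s - f (⌊s⌋ + 1)| + |f (⌊s⌋ + 1) - f s'| := abs_sub_le _ _ _
      _ ≤ (⌊s⌋ + 1 - s) + |(⌊s⌋ + 1) - s'| := add_le_add (hright s) (hcell _ _ hmid)
      _ = |s - s'| := by
        rw [abs_of_nonpos (by linarith), abs_of_nonpos (by linarith)]; ring
  · have hs : s < ⌊s⌋ + 1 := Int.lt_floor_add_one s
    have hs' : ((⌊s⌋ + 2 : ℤ) : ℝ) ≤ s' := (Int.cast_le.2 hfar).trans (Int.floor_le s')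
    push_cast at hs'
    exact (hrange s s').trans (by rw [abs_of_nonpos (by linarith)]; linarith)

noncomputable def linearInterp (a : ℤ → ℝ) (s : ℝ) : ℝ :=
  (1 - Int.fract s) * a ⌊s⌋ + Int.fract s * a (⌊s⌋ + 1)

noncomputable def tentInterp (a : ℤ → ℝ) (s : ℝ) : ℝ :=
  min (Int.fract s) (1 - Int.fract s) * a ⌊s⌋

section Interp

variable (a : ℤ → ℝ)

lemma linearInterp_fract (s : ℝ) :
    linearInterp (fun j => a (j + ⌊s⌋)) (Int.fract s) = linearInterp a s := by
  simp only [linearInterp, Int.floor_fract, Int.fract_fract, zero_add, add_comm (1 : ℤ)]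

lemma tentInterp_fract (s : ℝ) :
    tentInterp (fun j => a (j + ⌊s⌋)) (Int.fract s) = tentInterp a s := by
  simp only [tentInterp, Int.floor_fract, Int.fract_fract, zero_add]

variable {a}

lemma linearInterp_of_mem_Ico {t : ℝ} (ht : t ∈ Ico 0 1) :
    linearInterp a t = (1 - t) * a 0 + t * a 1 := by
  rw [linearInterp, Int.floor_eq_zero_iff.2 ht, Int.fract_eq_self.2 ht, zero_add]

lemma tentInterp_of_mem_Ico {t : ℝ} (ht : t ∈ Ico 0 1) :
    tentInterp a t = min t (1 - t) * a 0 := by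
  rw [tentInterp, Int.floor_eq_zero_iff.2 ht, Int.fract_eq_self.2 ht]

variable (ha : ∀ j, a j ∈ Icc 0 1)
include ha

lemma linearInterp_mem_Icc (s : ℝ) : linearInterp a s ∈ Icc 0 1 := by
  have h0 := Int.fract_nonneg s
  have h1 := Int.fract_lt_one s
  obtain ⟨ha0, ha1⟩ := ha ⌊s⌋
  obtain ⟨hb0, hb1⟩ := ha (⌊s⌋ + 1)
  constructor <;> simp only [linearInterp] <;> nlinarith

lemma lipschitzWith_linearInterp : LipschitzWith 1 (linearInterp a) := by
  have hstep : ∀ j, |a j - a (j + 1)| ≤ 1 := fun j =>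
    abs_sub_le_of_nonneg_of_le (ha j).1 (ha j).2 (ha _).1 (ha _).2
  refine lipschitzWith_one_of_floor_cells (fun s s' => ?_) (fun s s' hss' => ?_) (fun s => ?_)
  · exact abs_sub_le_of_nonneg_of_le (linearInterp_mem_Icc ha s).1
      (linearInterp_mem_Icc ha s).2 (linearInterp_mem_Icc ha s').1 (linearInterp_mem_Icc ha s').2
  · have hfract : Int.fract s' - Int.fract s = s' - s := by
      simp only [Int.fract, hss']; ring
    calc |linearInterp a s - linearInterp a s'|
        = |Int.fract s' - Int.fract s| * |a ⌊s⌋ - a (⌊s⌋ + 1)| := by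
          rw [← abs_mul, linearInterp, linearInterp, ← hss']; ring_nf
      _ ≤ |s - s'| * 1 := by
          rw [hfract, abs_sub_comm]; gcongr; exact hstep _
      _ = |s - s'| := mul_one _
  · have hend : linearInterp a (⌊s⌋ + 1) = a (⌊s⌋ + 1) := by
      rw [linearInterp, ← Int.cast_one, ← Int.cast_add, Int.floor_intCast, Int.fract_intCast]
      ring
    have hpos : 0 ≤ 1 - Int.fract s := sub_nonneg.2 (Int.fract_lt_one s).le
    have hdiff :
        linearInterp a s - a (⌊s⌋ + 1) = (1 - Int.fract s) * (a ⌊s⌋ - a (⌊s⌋ + 1)) := by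
      rw [linearInterp]; ring
    rw [hend]
    calc |linearInterp a s - a (⌊s⌋ + 1)|
        = (1 - Int.fract s) * |a ⌊s⌋ - a (⌊s⌋ + 1)| := by
          rw [hdiff, abs_mul, abs_of_nonneg hpos]
      _ ≤ (1 - Int.fract s) * 1 := by gcongr; exact hstep _
      _ = ⌊s⌋ + 1 - s := by rw [Int.fract]; ring

lemma tentInterp_nonneg (s : ℝ) : 0 ≤ tentInterp a s :=
  mul_nonneg (le_min (Int.fract_nonneg s) (sub_nonneg.2 (Int.fract_lt_one s).le)) (ha _).1

lemma tentInterp_le (s : ℝ) : tentInterp a s ≤ 1 - Int.fract s :=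
  (mul_le_of_le_one_right (le_min (Int.fract_nonneg s) (sub_nonneg.2 (Int.fract_lt_one s).le))
    (ha _).2).trans (min_le_right _ _)

lemma lipschitzWith_tentInterp : LipschitzWith 1 (tentInterp a) := by
  have hle_one : ∀ s, tentInterp a s ≤ 1 := fun s =>
    (tentInterp_le ha s).trans (by linarith [Int.fract_nonneg s])
  refine lipschitzWith_one_of_floor_cells (fun s s' => ?_) (fun s s' hss' => ?_) (fun s => ?_)
  · exact abs_sub_le_of_nonneg_of_le (tentInterp_nonneg ha s) (hle_one s)
      (tentInterp_nonneg ha s') (hle_one s')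
  · have hfract : Int.fract s - Int.fract s' = s - s' := by
      simp only [Int.fract, hss']; ring
    calc |tentInterp a s - tentInterp a s'|
        = |min (Int.fract s) (1 - Int.fract s) - min (Int.fract s') (1 - Int.fract s')|
          * |a ⌊s⌋| := by
          rw [← abs_mul, tentInterp, tentInterp, ← hss']; ring_nf
      _ ≤ max |Int.fract s - Int.fract s'| |1 - Int.fract s - (1 - Int.fract s')| * 1 := by
          gcongr
          · exact abs_min_sub_min_le_max _ _ _ _
          · exact abs_le.2 ⟨by linarith [(ha ⌊s⌋).1], (ha ⌊s⌋).2⟩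
      _ = |s - s'| := by
          rw [mul_one, show 1 - Int.fract s - (1 - Int.fract s') = -(Int.fract s - Int.fract s')
            by ring, abs_neg, max_self, hfract]
  · have hend : tentInterp a (⌊s⌋ + 1) = 0 := by
      rw [tentInterp, ← Int.cast_one, ← Int.cast_add, Int.fract_intCast]
      simp
    rw [hend, sub_zero, abs_of_nonneg (tentInterp_nonneg ha s)]
    exact (tentInterp_le ha s).trans_eq (by rw [Int.fract]; ring)

end Interp

namespace MarkovGraph

variable (G : MarkovGraph)

local notation "Σ₁" => Susp G (fun _ => (1 : ℝ))

lemma dist0_nonneg (x y : G.Space) : 0 ≤ dist0 G x y := by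
  unfold dist0
  split_ifs
  exacts [le_rfl, (Real.exp_pos _).le]

lemma dist0_self (x : G.Space) : dist0 G x x = 0 := if_pos rfl

lemma dist0_comm (x y : G.Space) : dist0 G x y = dist0 G y x := by
  simp only [dist0, eq_comm (a := x), ne_comm (a := x.1 _)]

lemma exp_neg_abs_le_dist0 {x y : G.Space} {n : ℤ} (h : x.1 n ≠ y.1 n) :
    Real.exp (-|(n : ℝ)|) ≤ dist0 G x y := by
  rw [dist0, if_neg fun hxy => h (by rw [hxy])]
  refine Real.exp_le_exp.2 (neg_le_neg (csInf_le ⟨0, ?_⟩ ⟨n, h, rfl⟩))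
  rintro t ⟨m, -, rfl⟩
  exact abs_nonneg _

noncomputable def coordIndicator (n : ℤ) (v : G.V) (x : G.Space) : ℝ :=
  if x.1 n = v then Real.exp (-|(n : ℝ)|) else 0

lemma coordIndicator_mem_Icc (n : ℤ) (v : G.V) (x : G.Space) :
    coordIndicator G n v x ∈ Icc 0 1 := by
  unfold coordIndicator
  split_ifs
  · exact ⟨(Real.exp_pos _).le, Real.exp_le_one_iff.2 (neg_nonpos.2 (abs_nonneg _))⟩
  · exact ⟨le_rfl, zero_le_one⟩

lemma abs_coordIndicator_sub_le (n : ℤ) (v : G.V) (x y : G.Space) :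
    |coordIndicator G n v x - coordIndicator G n v y| ≤ dist0 G x y := by
  by_cases hxy : x.1 n = y.1 n
  · simp only [coordIndicator, hxy, sub_self, abs_zero]
    exact dist0_nonneg G x y
  · refine le_trans ?_ (exp_neg_abs_le_dist0 G hxy)
    unfold coordIndicator
    split_ifs <;> simp [abs_of_pos (Real.exp_pos _), Real.exp_nonneg]

lemma coord_eq_of_coordIndicator_eq {x y : G.Space} {n : ℤ}
    (h : coordIndicator G n (x.1 n) x = coordIndicator G n (x.1 n) y) : x.1 n = y.1 n := by
  by_contra hne
  simp only [coordIndicator, if_neg (Ne.symm hne)] at h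
  exact (Real.exp_pos _).ne' h

lemma unitFlow_unitFlow (s t : ℝ) (z : Σ₁) :
    unitFlow G s (unitFlow G t z) = unitFlow G (t + s) z := by
  have hsum : Int.fract (z.1.2 + t) + s = z.1.2 + (t + s) - ⌊z.1.2 + t⌋ := by
    rw [Int.fract]; ring
  refine Subtype.ext (Prod.ext ?_ ?_)
  · show (G.shift ^ ⌊Int.fract (z.1.2 + t) + s⌋) ((G.shift ^ ⌊z.1.2 + t⌋) z.1.1) = _
    rw [← Equiv.Perm.mul_apply, ← zpow_add, hsum, Int.floor_sub_intCast, sub_add_cancel]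
    rfl
  · show Int.fract (Int.fract (z.1.2 + t) + s) = Int.fract (z.1.2 + (t + s))
    rw [hsum, Int.fract_sub_intCast]

lemma unitFlow_zero (z : Σ₁) : unitFlow G 0 z = z := by
  have hz : z.1.2 ∈ Ico (0 : ℝ) 1 := z.2
  refine Subtype.ext (Prod.ext ?_ ?_)
  · show (G.shift ^ ⌊z.1.2 + 0⌋) z.1.1 = z.1.1
    rw [add_zero, Int.floor_eq_zero_iff.2 hz, zpow_zero, Equiv.Perm.one_apply]
  · show Int.fract (z.1.2 + 0) = z.1.2
    rw [add_zero, Int.fract_eq_self.2 hz]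

lemma unitFlow_neg_eq_iff {t : ℝ} {z w : Σ₁} :
    unitFlow G (-t) w = z ↔ unitFlow G t z = w := by
  constructor <;> rintro rfl
  · rw [unitFlow_unitFlow, neg_add_cancel, unitFlow_zero]
  · rw [unitFlow_unitFlow, add_neg_cancel, unitFlow_zero]

lemma IsVert.symm {z w : Σ₁} (h : IsVert G z w) : IsVert G w z :=
  let ⟨t, ht⟩ := h
  ⟨-t, (unitFlow_neg_eq_iff G).2 ht⟩

lemma vertLength_comm (z w : Σ₁) : vertLength G z w = vertLength G w z := by
  suffices ∀ z w : Σ₁, {s : ℝ | 0 < s ∧ ∃ t : ℝ, |t| = s ∧ unitFlow G t z = w} ⊆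
      {s : ℝ | 0 < s ∧ ∃ t : ℝ, |t| = s ∧ unitFlow G t w = z} from
    congrArg sInf ((this z w).antisymm (this w z))
  rintro z w s ⟨hs, t, rfl, ht⟩
  exact ⟨hs, -t, abs_neg t, (unitFlow_neg_eq_iff G).2 ht⟩

lemma vertLength_nonneg (z w : Σ₁) : 0 ≤ vertLength G z w :=
  Real.sInf_nonneg fun _ hs => hs.1.le

lemma horizLength_nonneg (z w : Σ₁) : 0 ≤ horizLength G z w :=
  add_nonneg (mul_nonneg (sub_nonneg.2 z.2.2.le) (dist0_nonneg G _ _))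
    (mul_nonneg z.2.1 (dist0_nonneg G _ _))

lemma horizLength_self (z : Σ₁) : horizLength G z z = 0 := by
  simp [horizLength, dist0_self]

lemma horizLength_comm {z w : Σ₁} (h : IsHoriz G z w) :
    horizLength G z w = horizLength G w z := by
  rw [horizLength, horizLength, h, dist0_comm G z.1.1, dist0_comm G (G.shift z.1.1)]

namespace PathLen

variable {G}

lemma nonneg {z w : Σ₁} {ℓ : ℝ} (h : PathLen G z w ℓ) : 0 ≤ ℓ := by
  induction h with
  | horiz => exact horizLength_nonneg G _ _
  | vert => exact vertLength_nonneg G _ _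
  | comp _ _ iha ihb => exact add_nonneg iha ihb

lemma symm {z w : Σ₁} {ℓ : ℝ} (h : PathLen G z w ℓ) : PathLen G w z ℓ := by
  induction h with
  | horiz h => exact horizLength_comm G h ▸ horiz h.symm
  | vert h => exact vertLength_comm G _ _ ▸ vert (h.symm G)
  | comp _ _ iha ihb => rw [add_comm]; exact comp ihb iha

end PathLen

/-- Go horizontally from `(x, s)` to `(y, s)`, then vertically to `(y, t)`. -/
lemma exists_pathLen (z w : Σ₁) : ∃ ℓ, PathLen G z w ℓ := by
  let m : Σ₁ := ⟨(w.1.1, z.1.2), z.2⟩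
  refine ⟨_, (PathLen.horiz (z := z) (w := m) rfl).comp (PathLen.vert ⟨w.1.2 - z.1.2, ?_⟩)⟩
  refine Subtype.ext (Prod.ext ?_ ?_)
  · show (G.shift ^ ⌊z.1.2 + (w.1.2 - z.1.2)⌋) w.1.1 = w.1.1
    rw [add_sub_cancel, Int.floor_eq_zero_iff.2 w.2, zpow_zero, Equiv.Perm.one_apply]
  · show Int.fract (z.1.2 + (w.1.2 - z.1.2)) = w.1.2
    rw [add_sub_cancel, Int.fract_eq_self.2 w.2]

lemma bddBelow_pathLen (z w : Σ₁) : BddBelow {ℓ | PathLen G z w ℓ} :=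
  ⟨0, fun _ hℓ => hℓ.nonneg⟩

lemma d1_le {z w : Σ₁} {ℓ : ℝ} (h : PathLen G z w ℓ) : d1 G z w ≤ ℓ :=
  csInf_le (bddBelow_pathLen G z w) h

lemma d1_nonneg (z w : Σ₁) : 0 ≤ d1 G z w :=
  le_csInf (exists_pathLen G z w) fun _ hℓ => hℓ.nonneg

lemma d1_self (z : Σ₁) : d1 G z z = 0 :=
  le_antisymm ((d1_le G (PathLen.horiz rfl)).trans_eq (horizLength_self G z)) (d1_nonneg G z z)

lemma d1_comm (z w : Σ₁) : d1 G z w = d1 G w z :=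
  congrArg sInf (Set.ext fun _ => ⟨PathLen.symm, PathLen.symm⟩)

lemma d1_triangle (z w u : Σ₁) : d1 G z u ≤ d1 G z w + d1 G w u := by
  rw [← sub_le_iff_le_add]
  refine le_csInf (exists_pathLen G z w) fun a ha => ?_
  rw [sub_le_comm]
  refine le_csInf (exists_pathLen G w u) fun b hb => ?_
  rw [sub_le_iff_le_add']
  exact d1_le G (ha.comp hb)

theorem dist_le_d1 {X : Type*} [PseudoMetricSpace X] (f : Σ₁ → X)
    (hhoriz : ∀ z w, IsHoriz G z w → dist (f z) (f w) ≤ horizLength G z w)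
    (hvert : ∀ z u, dist (f z) (f (unitFlow G u z)) ≤ |u|) (z w : Σ₁) :
    dist (f z) (f w) ≤ d1 G z w := by
  refine le_csInf (exists_pathLen G z w) fun ℓ hℓ => ?_
  induction hℓ with
  | horiz h => exact hhoriz _ _ h
  | @vert z w h =>
    obtain ⟨t₀, rfl⟩ := h
    rcases eq_or_ne t₀ 0 with rfl | ht₀
    · exact (hvert z 0).trans (abs_zero.trans_le (vertLength_nonneg G _ _))
    · refine le_csInf ⟨|t₀|, abs_pos.2 ht₀, t₀, rfl, rfl⟩ ?_
      rintro s ⟨-, t, rfl, ht⟩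
      exact ht ▸ hvert z t
  | comp _ _ iha ihb => exact (dist_triangle _ _ _).trans (add_le_add iha ihb)

lemma height_eq_of_d1_eq_zero {z w : Σ₁} (h : d1 G z w = 0) : z.1.2 = w.1.2 := by
  have hdist := dist_le_d1 G (fun z : Σ₁ => (z.1.2 : AddCircle (1 : ℝ)))
    (fun z w hzw => by simp only [IsHoriz] at hzw; simp [hzw, horizLength_nonneg])
    (fun z u => by
      show dist _ ((Int.fract (z.1.2 + u) : ℝ) : AddCircle (1 : ℝ)) ≤ |u|
      rw [AddCircle.coe_fract, dist_eq_norm, ← QuotientAddGroup.mk_sub]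
      exact QuotientAddGroup.norm_mk_le_norm.trans_eq (by simp))
    z w
  rw [h] at hdist
  have hz : z.1.2 ∈ Ico (0 : ℝ) (0 + 1) := (zero_add (1 : ℝ)).symm ▸ z.2
  have hw : w.1.2 ∈ Ico (0 : ℝ) (0 + 1) := (zero_add (1 : ℝ)).symm ▸ w.2
  exact (AddCircle.coe_eq_coe_iff_of_mem_Ico hz hw).1 (dist_le_zero.1 hdist)

noncomputable def orbitSeq (I : G.Space → ℝ) (x : G.Space) (j : ℤ) : ℝ :=
  I ((G.shift ^ j) x)

lemma orbitSeq_zero (I : G.Space → ℝ) (x : G.Space) : orbitSeq G I x 0 = I x := rfl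

lemma orbitSeq_one (I : G.Space → ℝ) (x : G.Space) : orbitSeq G I x 1 = I (G.shift x) := by
  rw [orbitSeq, zpow_one]

lemma orbitSeq_unitFlow (I : G.Space → ℝ) (z : Σ₁) (u : ℝ) :
    orbitSeq G I (unitFlow G u z).1.1 = fun j => orbitSeq G I z.1.1 (j + ⌊z.1.2 + u⌋) := by
  funext j
  show I ((G.shift ^ j) ((G.shift ^ ⌊z.1.2 + u⌋) z.1.1)) = _
  rw [← Equiv.Perm.mul_apply, ← zpow_add]
  rfl

noncomputable def linearFeature (I : G.Space → ℝ) (z : Σ₁) : ℝ :=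
  linearInterp (orbitSeq G I z.1.1) z.1.2

/-- At height `1/2` the linear features cannot tell `…abab…` from `…baba…`; the tent feature
sees `I x` alone at every height `0 < t < 1`. -/
noncomputable def tentFeature (I : G.Space → ℝ) (z : Σ₁) : ℝ :=
  tentInterp (orbitSeq G I z.1.1) z.1.2

lemma linearFeature_unitFlow (I : G.Space → ℝ) (z : Σ₁) (u : ℝ) :
    linearFeature G I (unitFlow G u z) = linearInterp (orbitSeq G I z.1.1) (z.1.2 + u) := by
  rw [linearFeature, orbitSeq_unitFlow]
  exact linearInterp_fract _ _

lemma tentFeature_unitFlow (I : G.Space → ℝ) (z : Σ₁) (u : ℝ) :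
    tentFeature G I (unitFlow G u z) = tentInterp (orbitSeq G I z.1.1) (z.1.2 + u) := by
  rw [tentFeature, orbitSeq_unitFlow]
  exact tentInterp_fract _ _

section Features

variable {G} {I : G.Space → ℝ} (hI : ∀ x, I x ∈ Icc 0 1)
  (hIlip : ∀ x y, |I x - I y| ≤ dist0 G x y)
include hI hIlip

lemma dist_linearFeature_le_d1 (z w : Σ₁) :
    dist (linearFeature G I z) (linearFeature G I w) ≤ d1 G z w := by
  refine dist_le_d1 G _ ?_ (fun z u => ?_) z w
  · rintro ⟨⟨x, t⟩, ht : t ∈ Ico 0 1⟩ ⟨⟨y, t'⟩, ht' : t' ∈ Ico 0 1⟩ (rfl : t = t')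
    have h1t : 0 ≤ 1 - t := sub_nonneg.2 ht.2.le
    simp only [Real.dist_eq, linearFeature, horizLength]
    rw [linearInterp_of_mem_Ico ht, linearInterp_of_mem_Ico ht', orbitSeq_zero, orbitSeq_zero,
      orbitSeq_one, orbitSeq_one]
    calc _ = |(1 - t) * (I x - I y) + t * (I (G.shift x) - I (G.shift y))| := by ring_nf
      _ ≤ (1 - t) * |I x - I y| + t * |I (G.shift x) - I (G.shift y)| := by
          refine (abs_add_le _ _).trans_eq ?_
          rw [abs_mul, abs_mul, abs_of_nonneg h1t, abs_of_nonneg ht.1]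
      _ ≤ _ := add_le_add (mul_le_mul_of_nonneg_left (hIlip _ _) h1t)
          (mul_le_mul_of_nonneg_left (hIlip _ _) ht.1)
  · have hlip := (lipschitzWith_linearInterp (a := orbitSeq G I z.1.1) fun _ => hI _).dist_le_mul
      z.1.2 (z.1.2 + u)
    rw [linearFeature_unitFlow, linearFeature]
    simpa [Real.dist_eq] using hlip

lemma dist_tentFeature_le_d1 (z w : Σ₁) :
    dist (tentFeature G I z) (tentFeature G I w) ≤ d1 G z w := by
  refine dist_le_d1 G _ ?_ (fun z u => ?_) z w
  · rintro ⟨⟨x, t⟩, ht : t ∈ Ico 0 1⟩ ⟨⟨y, t'⟩, ht' : t' ∈ Ico 0 1⟩ (rfl : t = t')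
    have h1t : 0 ≤ 1 - t := sub_nonneg.2 ht.2.le
    simp only [Real.dist_eq, tentFeature, horizLength]
    rw [tentInterp_of_mem_Ico ht, tentInterp_of_mem_Ico ht', orbitSeq_zero, orbitSeq_zero,
      ← mul_sub, abs_mul, abs_of_nonneg (le_min ht.1 h1t)]
    calc _ ≤ (1 - t) * dist0 G x y := mul_le_mul (min_le_right _ _) (hIlip _ _) (abs_nonneg _) h1t
      _ ≤ _ := le_add_of_nonneg_right (mul_nonneg ht.1 (dist0_nonneg G _ _))
  · have hlip := (lipschitzWith_tentInterp (a := orbitSeq G I z.1.1) fun _ => hI _).dist_le_mul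
      z.1.2 (z.1.2 + u)
    rw [tentFeature_unitFlow, tentFeature]
    simpa [Real.dist_eq] using hlip

end Features

lemma coordIndicator_eq_of_d1_eq_zero {z w : Σ₁} (h : d1 G z w = 0) (n : ℤ) (v : G.V) :
    coordIndicator G n v z.1.1 = coordIndicator G n v w.1.1 := by
  have hI := coordIndicator_mem_Icc G n v
  have hIlip := abs_coordIndicator_sub_le G n v
  have ht := height_eq_of_d1_eq_zero G h
  rcases z.2.1.eq_or_lt with h0 | hpos
  · have hlin := dist_le_zero.1 (h ▸ dist_linearFeature_le_d1 hI hIlip z w)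
    rwa [linearFeature, linearFeature, linearInterp_of_mem_Ico z.2, linearInterp_of_mem_Ico w.2,
      ← ht, ← h0, sub_zero, one_mul, zero_mul, add_zero, one_mul, zero_mul, add_zero] at hlin
  · have htent := dist_le_zero.1 (h ▸ dist_tentFeature_le_d1 hI hIlip z w)
    rw [tentFeature, tentFeature, tentInterp_of_mem_Ico z.2, tentInterp_of_mem_Ico w.2,
      ← ht] at htent
    exact mul_left_cancel₀ (lt_min hpos (sub_pos.2 z.2.2)).ne' htent

lemma eq_of_d1_eq_zero {z w : Σ₁} (h : d1 G z w = 0) : z = w :=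
  Subtype.ext <| Prod.ext
    (Subtype.ext <| funext fun n =>
      coord_eq_of_coordIndicator_eq G (coordIndicator_eq_of_d1_eq_zero G h n _))
    (height_eq_of_d1_eq_zero G h)

theorem isMetricOn_d1 : IsMetricOn (d1 G) :=
  ⟨d1_nonneg G, fun z _ => ⟨eq_of_d1_eq_zero G, fun h => h ▸ d1_self G z⟩, d1_comm G,
    d1_triangle G⟩

lemma thetaR_val (r : G.Space → ℝ) (p : G.Susp r) :
    (thetaR G r p).1 = (p.1.1, p.1.2 / r p.1.1) := by
  simp [thetaR, p.2.1.trans_lt p.2.2]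

lemma thetaR_injective (r : G.Space → ℝ) : Function.Injective (thetaR G r) := by
  intro p q hpq
  have hval := congrArg Subtype.val hpq
  rw [thetaR_val, thetaR_val, Prod.mk.injEq] at hval
  obtain ⟨hx, ht⟩ := hval
  rw [← hx, div_left_inj' (p.2.1.trans_lt p.2.2).ne'] at ht
  exact Subtype.ext (Prod.ext hx ht)

end MarkovGraph

open MarkovGraph in
theorem statement0_general (G : MarkovGraph) (r : G.Space → ℝ) :
    IsMetricOn (d1 G) ∧ IsMetricOn (dr G r) :=
  ⟨isMetricOn_d1 G, (isMetricOn_d1 G).comp_injective (thetaR_injective G r)⟩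

open MarkovGraph in
/-- The Bowen–Walters function `d1` is a metric on the unit suspension
space Σ_1, and consequently `d_r(z,w) := d1(ϑ_r z, ϑ_r w)` is a metric on Σ_r. -/
theorem statement0 (G : MarkovGraph) (r : G.Space → ℝ) (c C₀ : ℝ) (hc : 0 < c)
    (hr1 : ∀ x, c ≤ r x) (hr2 : ∀ x, r x ≤ C₀) (hHolder : HolderFun G r) :
    IsMetricOn (d1 G) ∧ IsMetricOn (dr G r) :=
  statement0_general G r
end

section
/- Let σ:Σ→Σ be a topological Markov shift and r:Σ→ℝ a bounded Hölder continuous function, and let P^s, P^u be the Bowen–Marcus cocycles. Then for τ∈{s,u} and all points x,y,z∈Σ that are not pre-periodic: (i) (shift identity) whenever P^τ(x,y) is defined, P^τ(σx,σy) − P^τ(x,y) = r(x) − r(y); (ii) (cocycle equation) whenever y,z ∈ W^{wτ}(x), one has P^τ(x,y) + P^τ(y,z) = P^τ(x,z); in particular P^τ(x,x) = 0 and P^τ(x,y) = −P^τ(y,x). -/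
open MeasureTheory Filter Set
open scoped Classical

namespace MarkovGraph

variable (G : MarkovGraph)

/-- x is pre-periodic if one of its one-sided tails is periodic. -/
def PrePeriodic (x : G.Space) : Prop :=
  (∃ m : ℤ, ∃ p : ℤ, 0 < p ∧ ∀ i, m ≤ i → x.1 (i + p) = x.1 i) ∨
  (∃ n : ℤ, ∃ p : ℤ, 0 < p ∧ ∀ i, i ≤ n → x.1 (i - p) = x.1 i)

/-- y ∈ W^{ws}(x): some forward tails of x and y agree. -/
def Wws (x y : G.Space) : Prop := ∃ m n : ℤ, ∀ k : ℕ, y.1 (m + k) = x.1 (n + k)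

/-- y ∈ W^{wu}(x): some backward tails of x and y agree. -/
def Wwu (x y : G.Space) : Prop := ∃ m n : ℤ, ∀ k : ℕ, y.1 (m - k) = x.1 (n - k)

end MarkovGraph

open MarkovGraph in
/-- `Ps` is the stable Bowen–Marcus cocycle of `r`. -/
def IsBMStable (G : MarkovGraph) (r : G.Space → ℝ) (Ps : G.Space → G.Space → ℝ) : Prop :=
  ∀ x y : G.Space, ∀ m n : ℤ, ¬ PrePeriodic G x →
    (∀ k : ℕ, y.1 (m + k) = x.1 (n + k)) →
    Filter.Tendsto (fun k : ℕ => birkhoff G r (m + k) y - birkhoff G r (n + k) x)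
      Filter.atTop (nhds (Ps x y))

open MarkovGraph in
/-- `Pu` is the unstable Bowen–Marcus cocycle of `r`. -/
def IsBMUnstable (G : MarkovGraph) (r : G.Space → ℝ) (Pu : G.Space → G.Space → ℝ) : Prop :=
  ∀ x y : G.Space, ∀ m n : ℤ, ¬ PrePeriodic G x →
    (∀ k : ℕ, y.1 (m - k) = x.1 (n - k)) →
    Filter.Tendsto (fun k : ℕ => birkhoff G r (m - k) y - birkhoff G r (n - k) x)
      Filter.atTop (nhds (Pu x y))


/-!
All identities come from uniqueness of limits. For the shift identity, `σy` and `σx` agree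
along the same tails as `y` and `x` with both indices lowered by one, and `r_n ∘ σ = r_{n+1} - r`
turns the defining differences for `(σx, σy)` into those for `(x, y)` plus `r x - r y`. For the
cocycle equation, the tails of `y` and `z` are realigned against a common tail of `x`, after
which the defining differences for `(x, y)` and `(y, z)` telescope to those for `(x, z)`.
-/

namespace MarkovGraph

variable {G : MarkovGraph} {r : G.Space → ℝ}

@[simp]
lemma shift_apply_coe (x : G.Space) (i : ℤ) : (G.shift x).1 i = x.1 (i + 1) := rfl

lemma shift_zpow_apply_shift (n : ℤ) (x : G.Space) :
    (G.shift ^ n) (G.shift x) = (G.shift ^ (n + 1)) x := by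
  rw [zpow_add_one, Equiv.Perm.mul_apply]

@[simp]
lemma birkhoff_zero (x : G.Space) : birkhoff G r 0 x = 0 := by
  simp [birkhoff]

lemma birkhoff_of_nonpos {n : ℤ} (hn : n ≤ 0) (x : G.Space) :
    birkhoff G r n x =
      -∑ i ∈ Finset.range (-n).toNat, r ((G.shift ^ ((i : ℤ) - (-n).toNat)) x) := by
  rcases hn.lt_or_eq with hn | rfl
  · simp [birkhoff, hn.not_ge]
  · simp

lemma birkhoff_add_one (n : ℤ) (x : G.Space) :
    birkhoff G r (n + 1) x = birkhoff G r n x + r ((G.shift ^ n) x) := by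
  rcases le_or_gt 0 n with hn | hn
  · rw [birkhoff, birkhoff, if_pos hn, if_pos (by omega),
      show (n + 1).toNat = n.toNat + 1 by omega, Finset.sum_range_succ, Int.toNat_of_nonneg hn]
  · obtain ⟨j, rfl⟩ : ∃ j : ℕ, n = -((j : ℤ) + 1) := ⟨(-n - 1).toNat, by omega⟩
    rw [birkhoff_of_nonpos (by omega), birkhoff_of_nonpos (by omega),
      show (-(-((j : ℤ) + 1) + 1)).toNat = j by omega,
      show (-(-((j : ℤ) + 1))).toNat = j + 1 by omega, Finset.sum_range_succ']
    simp only [Nat.cast_add, Nat.cast_one, Nat.cast_zero, add_sub_add_right_eq_sub, zero_sub]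
    ring

lemma birkhoff_shift (n : ℤ) (x : G.Space) :
    birkhoff G r n (G.shift x) = birkhoff G r (n + 1) x - r x := by
  induction n with
  | zero => rw [birkhoff_add_one]; simp
  | succ i ih =>
    rw [birkhoff_add_one, ih, birkhoff_add_one ((i : ℤ) + 1), shift_zpow_apply_shift]
    ring
  | pred i ih =>
    have hy := birkhoff_add_one (r := r) (-(i : ℤ) - 1) (G.shift x)
    have hx := birkhoff_add_one (r := r) (-(i : ℤ)) x
    rw [sub_add_cancel, shift_zpow_apply_shift, sub_add_cancel] at hy
    rw [sub_add_cancel]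
    linarith

lemma prePeriodic_of_shift {x : G.Space} (h : PrePeriodic G (G.shift x)) : PrePeriodic G x := by
  rcases h with ⟨m, p, hp, h⟩ | ⟨n, p, hp, h⟩
  · refine .inl ⟨m + 1, p, hp, fun i hi => ?_⟩
    simpa [show i - 1 + p + 1 = i + p by ring] using h (i - 1) (by omega)
  · refine .inr ⟨n + 1, p, hp, fun i hi => ?_⟩
    simpa [show i - 1 - p + 1 = i - p by ring] using h (i - 1) (by omega)

lemma forward_tail_of_le {x y : G.Space} {m n n' : ℤ}
    (h : ∀ k : ℕ, y.1 (m + k) = x.1 (n + k)) (hn : n ≤ n') (k : ℕ) :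
    y.1 (m + (n' - n) + k) = x.1 (n' + k) := by
  have := h ((n' - n).toNat + k)
  push_cast [Int.toNat_of_nonneg (sub_nonneg.2 hn)] at this
  convert this using 2 <;> ring

lemma backward_tail_of_le {x y : G.Space} {m n n' : ℤ}
    (h : ∀ k : ℕ, y.1 (m - k) = x.1 (n - k)) (hn : n' ≤ n) (k : ℕ) :
    y.1 (m - (n - n') - k) = x.1 (n' - k) := by
  have := h ((n - n').toNat + k)
  push_cast [Int.toNat_of_nonneg (sub_nonneg.2 hn)] at this
  convert this using 2 <;> ring

end MarkovGraph

open MarkovGraph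

namespace IsBMStable

variable {G : MarkovGraph} {r : G.Space → ℝ} {Ps : G.Space → G.Space → ℝ}

lemma shift_sub (hPs : IsBMStable G r Ps) {x y : G.Space} (hx : ¬ PrePeriodic G x)
    (hxy : Wws G x y) : Ps (G.shift x) (G.shift y) - Ps x y = r x - r y := by
  obtain ⟨m, n, h⟩ := hxy
  have lower : ∀ (a : ℤ) (k : ℕ), a - 1 + k + 1 = a + k := fun _ _ => by ring
  have hσ := hPs (G.shift x) (G.shift y) (m - 1) (n - 1) (hx ∘ prePeriodic_of_shift)
    (fun k => by simpa only [shift_apply_coe, lower] using h k)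
  simp only [birkhoff_shift, lower] at hσ
  have := tendsto_nhds_unique ((hPs x y m n hx h).add_const (r x - r y))
    (hσ.congr fun _ => by ring)
  linarith

lemma add (hPs : IsBMStable G r Ps) {x y z : G.Space} (hx : ¬ PrePeriodic G x)
    (hy : ¬ PrePeriodic G y) (hxy : Wws G x y) (hxz : Wws G x z) : Ps x y + Ps y z = Ps x z := by
  obtain ⟨m₁, n₁, h₁⟩ := hxy
  obtain ⟨m₂, n₂, h₂⟩ := hxz
  set N := max n₁ n₂
  have hy' := forward_tail_of_le h₁ (le_max_left n₁ n₂)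
  have hz' := forward_tail_of_le h₂ (le_max_right n₁ n₂)
  have hxy := hPs x y _ N hx hy'
  have hyz := hPs y z _ _ hy fun k => (hz' k).trans (hy' k).symm
  exact tendsto_nhds_unique ((hxy.add hyz).congr fun k => by ring) (hPs x z _ N hx hz')

lemma self (hPs : IsBMStable G r Ps) {x : G.Space} (hx : ¬ PrePeriodic G x) : Ps x x = 0 := by
  have := hPs x x 0 0 hx fun _ => rfl
  simp only [sub_self] at this
  exact (tendsto_const_nhds_iff.1 this).symm

lemma antisymm (hPs : IsBMStable G r Ps) {x y : G.Space} (hx : ¬ PrePeriodic G x)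
    (hy : ¬ PrePeriodic G y) (hxy : Wws G x y) : Ps x y = -Ps y x := by
  have := hPs.add hx hy hxy ⟨0, 0, fun _ => rfl⟩
  rw [hPs.self hx] at this
  linarith

end IsBMStable

namespace IsBMUnstable

variable {G : MarkovGraph} {r : G.Space → ℝ} {Pu : G.Space → G.Space → ℝ}

lemma shift_sub (hPu : IsBMUnstable G r Pu) {x y : G.Space} (hx : ¬ PrePeriodic G x)
    (hxy : Wwu G x y) : Pu (G.shift x) (G.shift y) - Pu x y = r x - r y := by
  obtain ⟨m, n, h⟩ := hxy
  have lower : ∀ (a : ℤ) (k : ℕ), a - 1 - k + 1 = a - k := fun _ _ => by ring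
  have hσ := hPu (G.shift x) (G.shift y) (m - 1) (n - 1) (hx ∘ prePeriodic_of_shift)
    (fun k => by simpa only [shift_apply_coe, lower] using h k)
  simp only [birkhoff_shift, lower] at hσ
  have := tendsto_nhds_unique ((hPu x y m n hx h).add_const (r x - r y))
    (hσ.congr fun _ => by ring)
  linarith

lemma add (hPu : IsBMUnstable G r Pu) {x y z : G.Space} (hx : ¬ PrePeriodic G x)
    (hy : ¬ PrePeriodic G y) (hxy : Wwu G x y) (hxz : Wwu G x z) : Pu x y + Pu y z = Pu x z := by
  obtain ⟨m₁, n₁, h₁⟩ := hxy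
  obtain ⟨m₂, n₂, h₂⟩ := hxz
  set N := min n₁ n₂
  have hy' := backward_tail_of_le h₁ (min_le_left n₁ n₂)
  have hz' := backward_tail_of_le h₂ (min_le_right n₁ n₂)
  have hxy := hPu x y _ N hx hy'
  have hyz := hPu y z _ _ hy fun k => (hz' k).trans (hy' k).symm
  exact tendsto_nhds_unique ((hxy.add hyz).congr fun k => by ring) (hPu x z _ N hx hz')

lemma self (hPu : IsBMUnstable G r Pu) {x : G.Space} (hx : ¬ PrePeriodic G x) : Pu x x = 0 := by
  have := hPu x x 0 0 hx fun _ => rfl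
  simp only [sub_self] at this
  exact (tendsto_const_nhds_iff.1 this).symm

lemma antisymm (hPu : IsBMUnstable G r Pu) {x y : G.Space} (hx : ¬ PrePeriodic G x)
    (hy : ¬ PrePeriodic G y) (hxy : Wwu G x y) : Pu x y = -Pu y x := by
  have := hPu.add hx hy hxy ⟨0, 0, fun _ => rfl⟩
  rw [hPu.self hx] at this
  linarith

end IsBMUnstable

open MarkovGraph in
theorem statement5_general (G : MarkovGraph) (r : G.Space → ℝ)
    (Ps Pu : G.Space → G.Space → ℝ)
    (hPs : IsBMStable G r Ps) (hPu : IsBMUnstable G r Pu) :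
    (∀ x y : G.Space, ¬ PrePeriodic G x → ¬ PrePeriodic G y → Wws G x y →
      Ps (G.shift x) (G.shift y) - Ps x y = r x - r y) ∧
    (∀ x y : G.Space, ¬ PrePeriodic G x → ¬ PrePeriodic G y → Wwu G x y →
      Pu (G.shift x) (G.shift y) - Pu x y = r x - r y) ∧
    (∀ x y z : G.Space, ¬ PrePeriodic G x → ¬ PrePeriodic G y → ¬ PrePeriodic G z →
      Wws G x y → Wws G x z → Ps x y + Ps y z = Ps x z) ∧
    (∀ x y z : G.Space, ¬ PrePeriodic G x → ¬ PrePeriodic G y → ¬ PrePeriodic G z →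
      Wwu G x y → Wwu G x z → Pu x y + Pu y z = Pu x z) ∧
    (∀ x : G.Space, ¬ PrePeriodic G x → Ps x x = 0 ∧ Pu x x = 0) ∧
    (∀ x y : G.Space, ¬ PrePeriodic G x → ¬ PrePeriodic G y →
      (Wws G x y → Ps x y = -Ps y x) ∧ (Wwu G x y → Pu x y = -Pu y x)) :=
  ⟨fun _ _ hx _ => hPs.shift_sub hx,
    fun _ _ hx _ => hPu.shift_sub hx,
    fun _ _ _ hx hy _ => hPs.add hx hy,
    fun _ _ _ hx hy _ => hPu.add hx hy,
    fun _ hx => ⟨hPs.self hx, hPu.self hx⟩,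
    fun _ _ hx hy => ⟨hPs.antisymm hx hy, hPu.antisymm hx hy⟩⟩

open MarkovGraph in
/-- Shift identity and cocycle equation for the Bowen–Marcus
cocycles. -/
theorem statement5 (G : MarkovGraph) (r : G.Space → ℝ)
    (hbdd : ∃ M : ℝ, ∀ x, |r x| ≤ M) (hHolder : HolderFun G r)
    (Ps Pu : G.Space → G.Space → ℝ)
    (hPs : IsBMStable G r Ps) (hPu : IsBMUnstable G r Pu) :
    (∀ x y : G.Space, ¬ PrePeriodic G x → ¬ PrePeriodic G y → Wws G x y →
      Ps (G.shift x) (G.shift y) - Ps x y = r x - r y) ∧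
    (∀ x y : G.Space, ¬ PrePeriodic G x → ¬ PrePeriodic G y → Wwu G x y →
      Pu (G.shift x) (G.shift y) - Pu x y = r x - r y) ∧
    (∀ x y z : G.Space, ¬ PrePeriodic G x → ¬ PrePeriodic G y → ¬ PrePeriodic G z →
      Wws G x y → Wws G x z → Ps x y + Ps y z = Ps x z) ∧
    (∀ x y z : G.Space, ¬ PrePeriodic G x → ¬ PrePeriodic G y → ¬ PrePeriodic G z →
      Wwu G x y → Wwu G x z → Pu x y + Pu y z = Pu x z) ∧
    (∀ x : G.Space, ¬ PrePeriodic G x → Ps x x = 0 ∧ Pu x x = 0) ∧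
    (∀ x y : G.Space, ¬ PrePeriodic G x → ¬ PrePeriodic G y →
      (Wws G x y → Ps x y = -Ps y x) ∧ (Wwu G x y → Pu x y = -Pu y x)) :=
  statement5_general G r Ps Pu hPs hPu
end

section
/- Let σ:Σ→Σ be a topologically transitive topological Markov shift whose underlying graph is not a single cycle, and let σ_s:Σ^s→Σ^s be the associated one-sided shift. Let g:Σ^s→(0,1] satisfy Σ_{σ_s(y)=x} g(y) = 1 for all x∈Σ^s, with log g bounded and uniformly Hölder continuous on cylinders of length two. Let ν be an ergodic σ-invariant Borel probability measure on Σ giving positive measure to every nonempty cylinder, whose one-sided version ν^s = ν∘π_s^{−1} satisfies ν^s([a_0,a_1,…,a_k]) = ∫_{[a_1,…,a_k]} g(a_0·y) dν^s(y) for every admissible word (a_0,…,a_k) (where a_0·y denotes the concatenation). Then: (i) for every x∈Σ there is a unique Borel probability measure ν(·|x_0^∞) on W^s_loc(x) = {z∈Σ : z_i = x_i for all i ≥ 0} satisfying ν(_{−n}[a_{−n},…,a_{−1}] ∩ W^s_loc(x) | x_0^∞) = ∏_{j=1}^{n} g(a_{−j}⋯a_{−1}x_0x_1⋯) for all n and all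 admissible words; (ii) for ν-a.e. x∈Σ, the measure ν(·|x_0^∞) is non-atomic. -/
open MeasureTheory Filter Set
open scoped Classical

instance (G : MarkovGraph) : MeasurableSpace G.V := ⊤

instance (G : MarkovGraph) : MeasurableSpace G.Space :=
  inferInstanceAs (MeasurableSpace {x : ℤ → G.V // ∀ i, G.E (x i) (x (i + 1))})

instance (G : MarkovGraph) (r : G.Space → ℝ) : MeasurableSpace (G.Susp r) :=
  inferInstanceAs (MeasurableSpace {p : G.Space × ℝ // 0 ≤ p.2 ∧ p.2 < r p.1})

namespace MarkovGraph

variable (G : MarkovGraph)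

/-- The one-sided path space Σ^s. -/
def OS : Type := {x : ℕ → G.V // ∀ i, G.E (x i) (x (i + 1))}

/-- The one-sided left shift σ_s. -/
def shiftOS (x : G.OS) : G.OS := ⟨fun i => x.1 (i + 1), fun i => x.2 (i + 1)⟩

/-- The projection π_s : Σ → Σ^s, x ↦ (x_0, x_1, …). -/
def projOS (x : G.Space) : G.OS :=
  ⟨fun i => x.1 i, fun i => by push_cast; exact x.2 (i : ℤ)⟩

/-- The one-sided tail (x_m, x_{m+1}, …) of a two-sided sequence. -/
def tailOS (x : G.Space) (m : ℤ) : G.OS :=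
  ⟨fun i => x.1 (m + i), fun i => by push_cast; rw [← add_assoc]; exact x.2 (m + (i : ℤ))⟩

/-- One-sided cylinder [x_0, …, x_k] around a point. -/
def cylOS (x : G.OS) (k : ℕ) : Set G.OS := {y : G.OS | ∀ i ≤ k, y.1 i = x.1 i}

/-- Two-sided cylinder _a[x_a, …, x_b] around a point. -/
def cylZ (x : G.Space) (a b : ℤ) : Set G.Space :=
  {y : G.Space | ∀ i : ℤ, a ≤ i → i ≤ b → y.1 i = x.1 i}

end MarkovGraph

instance (G : MarkovGraph) : MeasurableSpace G.OS :=
  inferInstanceAs (MeasurableSpace {x : ℕ → G.V // ∀ i, G.E (x i) (x (i + 1))})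

namespace MarkovGraph

variable (G : MarkovGraph)

/-- Concatenation `a·y` of a vertex with a one-sided sequence (junk value if not
admissible). -/
noncomputable def consOS (a : G.V) (y : G.OS) : G.OS :=
  if h : G.E a (y.1 0) then
    ⟨fun i => match i with
      | 0 => a
      | j + 1 => y.1 j,
     fun i => match i with
      | 0 => h
      | j + 1 => y.2 j⟩
  else y

/-- Topological transitivity: any two vertices are joined by a finite path. -/
def TopTransitive : Prop :=
  ∀ u v : G.V, ∃ (k : ℕ) (w : ℕ → G.V), w 0 = u ∧ w k = v ∧ ∀ i < k, G.E (w i) (w (i + 1))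

/-- The graph is a single cycle. -/
def IsCycleGraph : Prop :=
  ∃ (n : ℕ) (e : G.V ≃ Fin n), ∀ u v, G.E u v ↔ (e v : ℕ) = ((e u : ℕ) + 1) % n

/-- The local stable set W^s_loc(x) = {z : z_i = x_i for all i ≥ 0}. -/
def WsLoc (x : G.Space) : Set G.Space := {z : G.Space | ∀ i : ℤ, 0 ≤ i → z.1 i = x.1 i}

end MarkovGraph

/-!
Given the future `u = x_0^∞`, the defining formula says how to grow the past one letter at a
time: the letter `a` is put in front of `u` with probability `g (a·u)`, and these probabilities
sum to one because `g` is a `g`-function. Cutting `[0, 1)` into consecutive intervals of lengths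
`g (a·u)`, and recursively rescaling each of them onto `[0, 1)`, turns Lebesgue measure into a
measure on `W^s_loc(x)` with the prescribed cylinder values. It is unique because the cylinder
values determine all finite-dimensional marginals.

For non-atomicity, `|log g| ≤ M` gives `g ≥ exp (-M)`, so wherever the past of `z` passes
through a vertex with two predecessors the corresponding factor of the cylinder measure is at
most `1 - exp (-M)`. A transitive graph whose predecessors are eventually unique along some past
is a single cycle, so this happens infinitely often, and the cylinders around `z` have measures
tending to `0`.
-/

section IntervalPartition

open Encodable Finset

variable {α : Type*} {p : α → ℝ}

lemma extend_zero_nonneg {β : Type*} (hp : ∀ a, 0 ≤ p a) (f : α → β) (b : β) :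
    0 ≤ Function.extend f p 0 b := by
  rw [Function.extend_def]
  split
  exacts [hp _, le_rfl]

variable [Encodable α]

variable (p) in
/-- `[0, 1)` is cut into consecutive intervals `[intervalStart p a, intervalStart p a + p a)`,
laid out in the order of the encoding of `α`. -/
noncomputable def intervalStart (a : α) : ℝ :=
  ∑ i ∈ range (encode a), Function.extend encode p 0 i

lemma intervalStart_add_self (a : α) :
    intervalStart p a + p a = ∑ i ∈ range (encode a + 1), Function.extend encode p 0 i := by
  rw [sum_range_succ, encode_injective.extend_apply, intervalStart]

lemma intervalStart_nonneg (hp : ∀ a, 0 ≤ p a) (a : α) : 0 ≤ intervalStart p a :=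
  sum_nonneg fun i _ => extend_zero_nonneg hp _ i

lemma intervalStart_add_self_le_one (hp : ∀ a, 0 ≤ p a) (hsum : HasSum p 1) (a : α) :
    intervalStart p a + p a ≤ 1 := by
  rw [intervalStart_add_self]
  exact sum_le_hasSum _ (fun i _ => extend_zero_nonneg hp _ i)
    ((hasSum_extend_zero encode_injective).2 hsum)

lemma intervalStart_add_self_le (hp : ∀ a, 0 ≤ p a) {a b : α} (h : encode a < encode b) :
    intervalStart p a + p a ≤ intervalStart p b := by
  rw [intervalStart_add_self, intervalStart]
  exact sum_le_sum_of_subset_of_nonneg (range_subset_range.2 h)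
    fun i _ _ => extend_zero_nonneg hp _ i

lemma eq_of_mem_Ico_intervalStart (hp : ∀ a, 0 ≤ p a) {a b : α} {t : ℝ}
    (ha : t ∈ Ico (intervalStart p a) (intervalStart p a + p a))
    (hb : t ∈ Ico (intervalStart p b) (intervalStart p b + p b)) : a = b := by
  refine encode_injective (le_antisymm ?_ ?_) <;> by_contra! h
  · linarith [intervalStart_add_self_le hp h, ha.1, hb.2]
  · linarith [intervalStart_add_self_le hp h, ha.2, hb.1]

lemma exists_mem_Ico_intervalStart (hsum : HasSum p 1) {t : ℝ} (ht : t ∈ Ico (0 : ℝ) 1) :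
    ∃ a, t ∈ Ico (intervalStart p a) (intervalStart p a + p a) := by
  set q := Function.extend encode p 0
  have hq : Tendsto (fun n => ∑ i ∈ range (n + 1), q i) atTop (nhds 1) :=
    ((hasSum_extend_zero encode_injective).2 hsum).tendsto_sum_nat.comp
      (tendsto_add_atTop_nat 1)
  have hex : ∃ n, t < ∑ i ∈ range (n + 1), q i := (hq.eventually (lt_mem_nhds ht.2)).exists
  set n := Nat.find hex
  have hle : ∑ i ∈ range n, q i ≤ t := by
    cases h : n with
    | zero => simp [ht.1]
    | succ k => exact not_lt.1 (Nat.find_min hex (by omega : k < n))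
  have hlt : t < ∑ i ∈ range (n + 1), q i := Nat.find_spec hex
  obtain ⟨a, ha⟩ : ∃ a, encode a = n := by
    refine not_not.1 fun hno => ?_
    have hqn : q n = 0 := Function.extend_apply' _ _ _ hno
    rw [sum_range_succ, hqn, add_zero] at hlt
    linarith
  refine ⟨a, ?_, ?_⟩
  · rw [intervalStart, ha]
    exact hle
  · rw [intervalStart_add_self, ha]
    exact hlt

variable [Nonempty α]

noncomputable def intervalIndex (p : α → ℝ) (t : ℝ) : α :=
  Classical.epsilon fun a => t ∈ Ico (intervalStart p a) (intervalStart p a + p a)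

lemma intervalIndex_eq_iff (hp : ∀ a, 0 ≤ p a) (hsum : HasSum p 1) {t : ℝ}
    (ht : t ∈ Ico (0 : ℝ) 1) {a : α} :
    intervalIndex p t = a ↔ t ∈ Ico (intervalStart p a) (intervalStart p a + p a) := by
  have hspec := Classical.epsilon_spec (exists_mem_Ico_intervalStart hsum ht)
  exact ⟨fun h => h ▸ hspec, eq_of_mem_Ico_intervalStart hp hspec⟩

end IntervalPartition

section Words

open Finset

variable {α S : Type*} (w : S → α → ℝ) (τ : α → S → S)

def wordState (s : S) (c : ℕ → α) : ℕ → S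
  | 0 => s
  | n + 1 => τ (c n) (wordState s c n)

noncomputable def wordWeight (s : S) (c : ℕ → α) (n : ℕ) : ℝ :=
  ∏ j ∈ range n, w (wordState τ s c j) (c j)

variable {w τ}

lemma wordState_succ' (s : S) (c : ℕ → α) (n : ℕ) :
    wordState τ s c (n + 1) = wordState τ (τ (c 0) s) (fun j => c (j + 1)) n := by
  induction n with
  | zero => rfl
  | succ n ih => rw [wordState, ih, wordState]

lemma wordWeight_succ' (s : S) (c : ℕ → α) (n : ℕ) :
    wordWeight w τ s c (n + 1) =
      w s (c 0) * wordWeight w τ (τ (c 0) s) (fun j => c (j + 1)) n := by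
  simp only [wordWeight, prod_range_succ', wordState_succ']
  rw [mul_comm]
  rfl

end Words

section IntervalCoding

open Finset

variable {α S : Type*} [Encodable α] [Nonempty α] (w : S → α → ℝ) (τ : α → S → S)

/-- `t` lies in the interval of the letter `a = intervalIndex (w s) t`; the state becomes
`τ a s`, and `t` is rescaled affinely from that interval onto `[0, 1)`. -/
noncomputable def codingStep (q : S × ℝ) : S × ℝ :=
  let a := intervalIndex (w q.1) q.2
  (τ a q.1, (q.2 - intervalStart (w q.1) a) / w q.1 a)

noncomputable def codingLetter (s : S) (t : ℝ) (n : ℕ) : α :=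
  let q := (codingStep w τ)^[n] (s, t)
  intervalIndex (w q.1) q.2

variable {w τ}

lemma codingLetter_succ (s : S) (t : ℝ) (n : ℕ) :
    codingLetter w τ s t (n + 1) =
      codingLetter w τ (codingStep w τ (s, t)).1 (codingStep w τ (s, t)).2 n := by
  simp only [codingLetter, Function.iterate_succ_apply]

variable (hw0 : ∀ s a, 0 ≤ w s a) (hw1 : ∀ s, HasSum (w s) 1)
include hw0 hw1

lemma codingCylinder_succ (n : ℕ) (s : S) (c : ℕ → α) :
    {t | t ∈ Ico (0 : ℝ) 1 ∧ ∀ j < n + 1, codingLetter w τ s t j = c j} =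
      {t | t ∈ Ico (intervalStart (w s) (c 0)) (intervalStart (w s) (c 0) + w s (c 0)) ∧
        (t - intervalStart (w s) (c 0)) / w s (c 0) ∈
          {t | t ∈ Ico (0 : ℝ) 1 ∧ ∀ j < n, codingLetter w τ (τ (c 0) s) t j = c (j + 1)}} := by
  set a := c 0
  set L := intervalStart (w s) a
  have hstep : ∀ t, intervalIndex (w s) t = a →
      codingStep w τ (s, t) = (τ a s, (t - L) / w s a) := fun t h => by
    simp only [codingStep, h, L]
  ext t
  constructor
  · rintro ⟨ht, hc⟩
    have h0 : intervalIndex (w s) t = a := hc 0 n.succ_pos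
    have hmem := (intervalIndex_eq_iff (hw0 s) (hw1 s) ht).1 h0
    have hpos : 0 < w s a := by linarith [hmem.1, hmem.2]
    refine ⟨hmem, ⟨div_nonneg (by linarith [hmem.1]) hpos.le,
      (div_lt_one hpos).2 (by linarith [hmem.2])⟩, fun j hj => ?_⟩
    have hcj := hc (j + 1) (by omega)
    rwa [codingLetter_succ, hstep t h0] at hcj
  · rintro ⟨hmem, -, hc⟩
    have ht : t ∈ Ico (0 : ℝ) 1 := ⟨(intervalStart_nonneg (hw0 s) a).trans hmem.1,
      hmem.2.trans_le (intervalStart_add_self_le_one (hw0 s) (hw1 s) a)⟩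
    have h0 := (intervalIndex_eq_iff (hw0 s) (hw1 s) ht).2 hmem
    refine ⟨ht, fun j hj => ?_⟩
    cases j with
    | zero => exact h0
    | succ j =>
      rw [codingLetter_succ, hstep t h0]
      exact hc j (by omega)

theorem codingCylinder_eq_Ico (n : ℕ) (s : S) (c : ℕ → α) :
    ∃ A, 0 ≤ A ∧ A + wordWeight w τ s c n ≤ 1 ∧
      {t | t ∈ Ico (0 : ℝ) 1 ∧ ∀ j < n, codingLetter w τ s t j = c j} =
        Ico A (A + wordWeight w τ s c n) := by
  induction n generalizing s c with
  | zero => exact ⟨0, le_rfl, by simp [wordWeight], by ext t; simp [wordWeight]⟩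
  | succ n ih =>
    obtain ⟨A, hA0, hA1, hA⟩ := ih (τ (c 0) s) fun j => c (j + 1)
    rw [codingCylinder_succ hw0 hw1, hA, wordWeight_succ']
    set W := wordWeight w τ (τ (c 0) s) (fun j => c (j + 1)) n
    set a := c 0
    set L := intervalStart (w s) a
    have hL0 : 0 ≤ L := intervalStart_nonneg (hw0 s) a
    have hL1 : L + w s a ≤ 1 := intervalStart_add_self_le_one (hw0 s) (hw1 s) a
    have hwa := hw0 s a
    refine ⟨L + w s a * A, by positivity, by nlinarith, ?_⟩
    ext t
    simp only [mem_ofPred_eq, Set.mem_Ico]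
    constructor
    · rintro ⟨⟨h1, h2⟩, h3, h4⟩
      have hpos : 0 < w s a := by linarith
      rw [le_div_iff₀ hpos] at h3
      rw [div_lt_iff₀ hpos] at h4
      constructor <;> nlinarith
    · rintro ⟨h1, h2⟩
      have hpos : 0 < w s a := by nlinarith
      exact ⟨⟨by nlinarith, by nlinarith⟩, (le_div_iff₀ hpos).2 (by nlinarith),
        (div_lt_iff₀ hpos).2 (by nlinarith)⟩

theorem volume_codingCylinder (n : ℕ) (s : S) (c : ℕ → α) :
    volume {t | t ∈ Ico (0 : ℝ) 1 ∧ ∀ j < n, codingLetter w τ s t j = c j} =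
      ENNReal.ofReal (wordWeight w τ s c n) := by
  obtain ⟨A, -, -, hA⟩ := codingCylinder_eq_Ico hw0 hw1 n s c
  rw [hA, Real.volume_Ico, add_sub_cancel_left]

lemma measurableSet_codingLetter_eq (s : S) (n : ℕ) (a : α) :
    MeasurableSet {t | t ∈ Ico (0 : ℝ) 1 ∧ codingLetter w τ s t n = a} := by
  have hunion : {t | t ∈ Ico (0 : ℝ) 1 ∧ codingLetter w τ s t n = a} =
      ⋃ c : Fin n → α, {t | t ∈ Ico (0 : ℝ) 1 ∧
        ∀ j < n + 1, codingLetter w τ s t j = if h : j < n then c ⟨j, h⟩ else a} := by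
    ext t
    simp only [Set.mem_ofPred_eq, Set.mem_iUnion]
    constructor
    · rintro ⟨ht, hn⟩
      refine ⟨fun j => codingLetter w τ s t j, ht, fun j hj => ?_⟩
      split_ifs with h
      · rfl
      · rwa [show j = n by omega]
    · rintro ⟨c, ht, hc⟩
      exact ⟨ht, by simpa using hc n n.lt_succ_self⟩
  rw [hunion]
  refine MeasurableSet.iUnion fun c => ?_
  obtain ⟨A, -, -, hA⟩ := codingCylinder_eq_Ico hw0 hw1 (n + 1) s
    fun j => if h : j < n then c ⟨j, h⟩ else a
  rw [hA]
  exact measurableSet_Ico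

lemma codingLetter_weight_pos {s : S} {t : ℝ} (ht : t ∈ Ico (0 : ℝ) 1) (j : ℕ) :
    0 < w (wordState τ s (codingLetter w τ s t) j) (codingLetter w τ s t j) := by
  obtain ⟨A, -, -, hA⟩ := codingCylinder_eq_Ico hw0 hw1 (j + 1) s (codingLetter w τ s t)
  have hmem : t ∈ Ico A (A + wordWeight w τ s (codingLetter w τ s t) (j + 1)) :=
    hA ▸ ⟨ht, fun _ _ => rfl⟩
  have hprod : 0 < wordWeight w τ s (codingLetter w τ s t) (j + 1) := by
    linarith [hmem.1, hmem.2]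
  rw [wordWeight, prod_range_succ] at hprod
  exact pos_of_mul_pos_right hprod (prod_nonneg fun i _ => hw0 _ _)

end IntervalCoding

open Finset in
theorem tendsto_prod_range_zero_of_frequently_le {f : ℕ → ℝ} {ρ : ℝ}
    (hf0 : ∀ j, 0 ≤ f j) (hf1 : ∀ j, f j ≤ 1) (hρ : ρ < 1)
    (hfreq : ∃ᶠ j in atTop, f j ≤ ρ) :
    Tendsto (fun n => ∏ j ∈ range n, f j) atTop (nhds 0) := by
  set q := fun n => ∏ j ∈ range n, f j
  have hq0 : ∀ n, 0 ≤ q n := fun n => prod_nonneg fun j _ => hf0 j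
  have hanti : Antitone q := antitone_nat_of_succ_le fun n => by
    simp only [q, prod_range_succ]
    exact mul_le_of_le_one_right (hq0 n) (hf1 n)
  have hρ0 : 0 ≤ ρ := by
    obtain ⟨j, -, hj⟩ := (frequently_atTop.1 hfreq) 0
    exact (hf0 j).trans hj
  have hpow : ∀ k, ∃ n, q n ≤ ρ ^ k := by
    intro k
    induction k with
    | zero => exact ⟨0, by simp [q]⟩
    | succ k ih =>
      obtain ⟨n, hn⟩ := ih
      obtain ⟨j, hjn, hj⟩ := (frequently_atTop.1 hfreq) n
      refine ⟨j + 1, ?_⟩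
      rw [show q (j + 1) = q j * f j from prod_range_succ f j, pow_succ]
      exact mul_le_mul ((hanti hjn).trans hn) hj (hf0 j) (pow_nonneg hρ0 k)
  refine tendsto_order.2 ⟨fun a ha => Eventually.of_forall fun n => ha.trans_le (hq0 n),
    fun a ha => ?_⟩
  obtain ⟨k, hk⟩ := exists_pow_lt_of_lt_one ha hρ
  obtain ⟨n, hn⟩ := hpow k
  exact eventually_atTop.2 ⟨n, fun m hm => ((hanti hm).trans hn).trans_lt hk⟩

lemma eq_add_one_mod_iff_rev {n i j : ℕ} (hi : i < n) (hj : j < n) :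
    i = (j + 1) % n ↔ n - (j + 1) = (n - (i + 1) + 1) % n := by
  have h1 : (j + 1) % n = if j + 1 < n then j + 1 else 0 := by
    split_ifs with h
    · exact Nat.mod_eq_of_lt h
    · rw [show j + 1 = n by omega, Nat.mod_self]
  have h2 : (n - (i + 1) + 1) % n = if i = 0 then 0 else n - i := by
    split_ifs with h
    · rw [h, show n - (0 + 1) + 1 = n by omega, Nat.mod_self]
    · rw [Nat.mod_eq_of_lt (by omega)]; omega
  rw [h1, h2]
  split_ifs <;> omega

namespace MarkovGraph

variable {G : MarkovGraph}

instance instCountableV : Countable G.V := G.countableV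

noncomputable instance instEncodableV : Encodable G.V := Encodable.ofCountable _

instance instDiscreteMeasurableSpaceV : DiscreteMeasurableSpace G.V := ⟨fun _ => trivial⟩

lemma Space.edge_sub_one (z : G.Space) (i : ℤ) : G.E (z.1 (i - 1)) (z.1 i) := by
  simpa using z.2 (i - 1)

def HasTwoPredecessors (v : G.V) : Prop := ∃ a b, a ≠ b ∧ G.E a v ∧ G.E b v

lemma path_eq_of_unique_pred {w c : ℕ → G.V} {k : ℕ} (hw : ∀ i < k, G.E (w i) (w (i + 1)))
    (hwk : w k = c 0) (hc : ∀ i < k, ∀ b, G.E b (c i) → b = c (i + 1)) :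
    ∀ i ≤ k, w (k - i) = c i
  | 0, _ => hwk
  | i + 1, hi => by
    have hedge := hw (k - (i + 1)) (by omega)
    rw [show k - (i + 1) + 1 = k - i by omega, path_eq_of_unique_pred hw hwk hc i (by omega)]
      at hedge
    exact hc i (by omega) _ hedge

open Function in
theorem isCycleGraph_of_unique_pred (hT : TopTransitive G)
    (hU : ∀ v a b, G.E a v → G.E b v → a = b) : IsCycleGraph G := by
  -- With `p` the predecessor map, transitivity makes every vertex an iterate `p^[k] v₀`, so `G`
  -- is the periodic `p`-orbit of `v₀`, enumerated backwards.
  choose p hp using G.in_edge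
  have hEp : ∀ a b, G.E a b ↔ a = p b := fun a b =>
    ⟨fun h => hU b a _ h (hp b), fun h => h ▸ hp b⟩
  have hreach : ∀ u v, ∃ k, u = p^[k] v := by
    intro u v
    obtain ⟨k, w, rfl, hwk, hw⟩ := hT u v
    refine ⟨k, ?_⟩
    simpa using path_eq_of_unique_pred (c := fun i => p^[i] v) hw hwk
      (fun i _ b hb => by rw [iterate_succ_apply']; exact (hEp _ _).1 hb) k le_rfl
  rcases isEmpty_or_nonempty G.V with hV | ⟨⟨v₀⟩⟩
  · exact ⟨0, Equiv.equivOfIsEmpty _ _, fun u => isEmptyElim u⟩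
  obtain ⟨k, hk⟩ := hreach v₀ (p v₀)
  have hper : IsPeriodicPt p (k + 1) v₀ := by
    rw [IsPeriodicPt, IsFixedPt, iterate_succ_apply]; exact hk.symm
  set n := minimalPeriod p v₀
  have hn : 0 < n := hper.minimalPeriod_pos k.succ_pos
  let e : Fin n ≃ G.V := Equiv.ofBijective (fun i => p^[i] v₀)
    ⟨fun i j h => Fin.ext ((iterate_eq_iterate_iff_of_lt_minimalPeriod i.2 j.2).1 h), fun u => by
      obtain ⟨k, rfl⟩ := hreach u v₀
      exact ⟨⟨k % n, Nat.mod_lt _ hn⟩, iterate_mod_minimalPeriod_eq⟩⟩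
  refine ⟨n, e.symm.trans Fin.revPerm, fun u v => ?_⟩
  obtain ⟨i, rfl⟩ := e.surjective u
  obtain ⟨j, rfl⟩ := e.surjective v
  have hpe : p (e j) = e ⟨(j + 1) % n, Nat.mod_lt _ hn⟩ := by
    show p (p^[j] v₀) = p^[(j + 1) % n] v₀
    rw [iterate_mod_minimalPeriod_eq, iterate_succ_apply']
  simp only [hEp, hpe, e.apply_eq_iff_eq, Equiv.trans_apply, Equiv.symm_apply_apply,
    Fin.revPerm_apply, Fin.val_rev, Fin.ext_iff]
  exact eq_add_one_mod_iff_rev i.2 j.2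

theorem exists_hasTwoPredecessors_past (hT : TopTransitive G) (hNC : ¬ IsCycleGraph G)
    (z : G.Space) (N : ℕ) : ∃ j ≥ N, HasTwoPredecessors (z.1 (-(j : ℤ))) := by
  -- Otherwise predecessors are unique along the past `c` of `z` beyond `N`, and transitivity
  -- puts every vertex on `c`.
  by_contra! hnone
  set c : ℕ → G.V := fun i => z.1 (-((N + i : ℕ) : ℤ))
  have hc : ∀ i, G.E (c (i + 1)) (c i) := fun i => by
    have h := Space.edge_sub_one z (-((N + i : ℕ) : ℤ))
    rwa [show -((N + i : ℕ) : ℤ) - 1 = -((N + (i + 1) : ℕ) : ℤ) by push_cast; ring] at h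
  have hcU : ∀ i, ∀ b, G.E b (c i) → b = c (i + 1) := fun i b hb => by
    by_contra hne
    exact hnone (N + i) (by omega) ⟨b, c (i + 1), hne, hb, hc i⟩
  refine hNC (isCycleGraph_of_unique_pred hT fun v a b ha hb => ?_)
  obtain ⟨k, w, rfl, hwk, hw⟩ := hT v (z.1 (-(N : ℤ)))
  have hv : w 0 = c k := by
    simpa using path_eq_of_unique_pred hw (by simpa [c] using hwk) (fun i _ => hcU i) k le_rfl
  by_contra hne
  rw [hv] at ha hb
  exact hnone (N + k) (by omega) ⟨a, b, hne, ha, hb⟩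

lemma measurable_coord (i : ℤ) : Measurable fun y : G.Space => y.1 i :=
  (measurable_pi_apply i).comp measurable_subtype_coe

lemma measurableSet_cylZ (z : G.Space) (a b : ℤ) : MeasurableSet (cylZ G z a b) := by
  simp only [cylZ, ofPred_forall]
  exact .iInter fun i => .iInter fun _ => .iInter fun _ =>
    measurable_coord i (measurableSet_singleton _)

lemma measurableSet_WsLoc (x : G.Space) : MeasurableSet (WsLoc G x) := by
  simp only [WsLoc, ofPred_forall]
  exact .iInter fun i => .iInter fun _ => measurable_coord i (measurableSet_singleton _)

lemma cylZ_eq_of_mem {y z : G.Space} {a b : ℤ} (hy : y ∈ cylZ G z a b) :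
    cylZ G y a b = cylZ G z a b := by
  ext u
  exact forall₂_congr fun i hai => forall_congr' fun hib => by rw [hy i hai hib]

theorem ext_of_cylZ {m₁ m₂ : Measure G.Space} [IsFiniteMeasure m₁]
    (h : ∀ z (n : ℕ), 1 ≤ n → m₁ (cylZ G z (-n) n) = m₂ (cylZ G z (-n) n)) :
    m₁ = m₂ := by
  set p : G.Space → ℤ → G.V := Subtype.val
  have hp : Measurable p := measurable_subtype_coe
  suffices hmap : m₁.map p = m₂.map p by
    ext A hA
    obtain ⟨A', hA', rfl⟩ := hA
    exact (Measure.map_apply hp hA').symm.trans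
      ((congrArg (· A') hmap).trans (Measure.map_apply hp hA'))
  refine IsProjectiveLimit.unique (P := fun I => (m₁.map p).map I.restrict)
    (fun _ => rfl) (fun I => ?_)
  obtain ⟨N, hN, hIN⟩ : ∃ N : ℕ, 1 ≤ N ∧ I ⊆ Finset.Icc (-(N : ℤ)) N := by
    refine ⟨I.sup Int.natAbs + 1, by omega, fun i hi => ?_⟩
    have := Finset.le_sup (f := Int.natAbs) hi
    rw [Finset.mem_Icc]
    omega
  set J := Finset.Icc (-(N : ℤ)) N
  have hres : Measurable (J.restrict (π := fun _ => G.V)) := Finset.measurable_restrict _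
  suffices hJ : (m₂.map p).map J.restrict = (m₁.map p).map J.restrict by
    have h' := congrArg (Measure.map (Finset.restrict₂ (π := fun _ => G.V) hIN)) hJ
    rwa [Measure.map_map (Finset.measurable_restrict₂ (X := fun _ => G.V) hIN) hres,
      Measure.map_map (Finset.measurable_restrict₂ (X := fun _ => G.V) hIN) hres,
      Finset.restrict₂_comp_restrict] at h'
  refine Measure.ext_of_singleton fun σ => ?_
  rw [Measure.map_map hres hp, Measure.map_map hres hp,
    Measure.map_apply (hres.comp hp) (measurableSet_singleton σ),
    Measure.map_apply (hres.comp hp) (measurableSet_singleton σ)]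
  rcases ((J.restrict ∘ p) ⁻¹' {σ} : Set G.Space).eq_empty_or_nonempty with he | ⟨z, hz⟩
  · simp [he]
  · have hcyl : (J.restrict ∘ p) ⁻¹' {σ} = cylZ G z (-N) N := by
      ext y
      simp only [Set.mem_preimage, Function.comp_apply, Set.mem_singleton_iff] at hz ⊢
      rw [← hz, funext_iff]
      simp [J, Finset.restrict, p, cylZ, and_imp]
    rw [hcyl, h z N hN]

section OneSided

variable {a : G.V} {u : G.OS}

lemma consOS_val_zero (h : G.E a (u.1 0)) : (G.consOS a u).1 0 = a := by
  simp [consOS, h]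

lemma consOS_val_succ (h : G.E a (u.1 0)) (j : ℕ) : (G.consOS a u).1 (j + 1) = u.1 j := by
  simp [consOS, h]

lemma shiftOS_consOS (h : G.E a (u.1 0)) : G.shiftOS (G.consOS a u) = u :=
  Subtype.ext (funext (consOS_val_succ h))

lemma consOS_shiftOS (y : G.OS) : G.consOS (y.1 0) (G.shiftOS y) = y := by
  have h : G.E (y.1 0) ((G.shiftOS y).1 0) := y.2 0
  refine Subtype.ext (funext fun j => ?_)
  cases j with
  | zero => exact consOS_val_zero h
  | succ j => exact consOS_val_succ h j

lemma edge_tailOS (z : G.Space) (m : ℤ) : G.E (z.1 (m - 1)) ((G.tailOS z m).1 0) := by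
  simpa [tailOS] using Space.edge_sub_one z m

lemma consOS_tailOS (z : G.Space) (m : ℤ) :
    G.consOS (z.1 (m - 1)) (G.tailOS z m) = G.tailOS z (m - 1) := by
  refine Subtype.ext (funext fun j => ?_)
  cases j with
  | zero => simpa [tailOS] using consOS_val_zero (edge_tailOS z m)
  | succ j =>
    rw [consOS_val_succ (edge_tailOS z m)]
    exact congrArg z.1 (by push_cast; ring)

lemma wordState_past {x z : G.Space} (hz : z ∈ WsLoc G x) (j : ℕ) :
    wordState G.consOS (G.projOS x) (fun j => z.1 (-(j : ℤ) - 1)) j = G.tailOS z (-j) := by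
  induction j with
  | zero => exact Subtype.ext (funext fun i => by
      simpa [wordState, projOS, tailOS] using (hz i (by positivity)).symm)
  | succ j ih =>
    rw [wordState, ih, consOS_tailOS]
    push_cast
    ring_nf

end OneSided

noncomputable def predWeight (g : G.OS → ℝ) (u : G.OS) : G.V → ℝ :=
  {a | G.E a (u.1 0)}.indicator fun a => g (G.consOS a u)

section PredWeight

variable {g : G.OS → ℝ} {u : G.OS} {a : G.V}

lemma predWeight_of_edge (h : G.E a (u.1 0)) : predWeight g u a = g (G.consOS a u) := by
  simp [predWeight, h]

lemma edge_of_predWeight_ne_zero (h : predWeight g u a ≠ 0) : G.E a (u.1 0) := by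
  by_contra h'
  exact h (by simp [predWeight, h'])

lemma predWeight_nonneg (hg0 : ∀ y, 0 ≤ g y) (u : G.OS) (a : G.V) : 0 ≤ predWeight g u a :=
  Set.indicator_nonneg (fun _ _ => hg0 _) a

lemma hasSum_predWeight (hgsum : ∀ x : G.OS, ∑' y : {y : G.OS // G.shiftOS y = x}, g y.1 = 1)
    (u : G.OS) : HasSum (predWeight g u) 1 := by
  have hsum : Summable fun y : {y : G.OS // G.shiftOS y = u} => g y.1 := by
    by_contra hns
    simpa [tsum_eq_zero_of_not_summable hns] using hgsum u
  have hinv : ∀ y : {y : G.OS // G.shiftOS y = u}, G.E (y.1.1 0) (u.1 0) := fun ⟨y, hy⟩ =>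
    hy ▸ (y.2 0 : G.E (y.1 0) ((G.shiftOS y).1 0))
  let e : {a // G.E a (u.1 0)} ≃ {y : G.OS // G.shiftOS y = u} :=
    { toFun := fun a => ⟨G.consOS a.1 u, shiftOS_consOS a.2⟩
      invFun := fun y => ⟨y.1.1 0, hinv y⟩
      left_inv := fun a => Subtype.ext (consOS_val_zero a.2)
      right_inv := fun ⟨y, hy⟩ => Subtype.ext (by
        subst hy
        exact consOS_shiftOS y) }
  have h1 : HasSum (fun y : {y : G.OS // G.shiftOS y = u} => g y.1) 1 := by
    simpa [hgsum u] using hsum.hasSum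
  have h2 : HasSum (fun a : {a // G.E a (u.1 0)} => g (G.consOS a.1 u)) 1 := e.hasSum_iff.2 h1
  exact (hasSum_subtype_iff_indicator (s := {a | G.E a (u.1 0)})).1 h2

end PredWeight

section Construction

variable [Nonempty G.V] (g : G.OS → ℝ) (x : G.Space)

noncomputable def pastLetter (t : ℝ) : ℕ → G.V :=
  codingLetter (predWeight g) G.consOS (G.projOS x) t

noncomputable def pastSeq (t : ℝ) (i : ℤ) : G.V :=
  if t ∈ Ico (0 : ℝ) 1 ∧ i < 0 then pastLetter g x t (-(i + 1)).toNat else x.1 i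

/-- The fallback `x` is never taken when `g` is a `g`-function (`pastPoint_eq`). -/
noncomputable def pastPoint (t : ℝ) : G.Space :=
  if h : ∀ i, G.E (pastSeq g x t i) (pastSeq g x t (i + 1)) then ⟨pastSeq g x t, h⟩ else x

noncomputable def condMeasure : Measure G.Space :=
  (volume.restrict (Ico (0 : ℝ) 1)).map (pastPoint g x)

variable {g}
variable (hg0 : ∀ y, 0 ≤ g y)
variable (hgsum : ∀ x : G.OS, ∑' y : {y : G.OS // G.shiftOS y = x}, g y.1 = 1)
include hg0 hgsum

lemma pastLetter_edge {t : ℝ} (ht : t ∈ Ico (0 : ℝ) 1) :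
    G.E (pastLetter g x t 0) (x.1 0) ∧
      ∀ j, G.E (pastLetter g x t (j + 1)) (pastLetter g x t j) := by
  set c := pastLetter g x t
  have hadm : ∀ j, G.E (c j) ((wordState G.consOS (G.projOS x) c j).1 0) := fun j =>
    edge_of_predWeight_ne_zero
      (codingLetter_weight_pos (predWeight_nonneg hg0) (hasSum_predWeight hgsum) ht j).ne'
  refine ⟨hadm 0, fun j => ?_⟩
  have h := hadm (j + 1)
  rwa [wordState, consOS_val_zero (hadm j)] at h

lemma pastSeq_isPath (t : ℝ) (i : ℤ) : G.E (pastSeq g x t i) (pastSeq g x t (i + 1)) := by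
  by_cases ht : t ∈ Ico (0 : ℝ) 1
  · obtain ⟨h0, hsucc⟩ := pastLetter_edge x hg0 hgsum ht
    rcases lt_trichotomy i (-1) with hi | rfl | hi
    · simp only [pastSeq, ht, true_and, show i < 0 by omega, show i + 1 < 0 by omega, if_true]
      rw [show (-(i + 1)).toNat = (-(i + 1 + 1)).toNat + 1 by omega]
      exact hsucc _
    · simpa [pastSeq, ht] using h0
    · simp only [pastSeq, ht, true_and, if_neg (show ¬ i < 0 by omega),
        if_neg (show ¬ i + 1 < 0 by omega)]
      exact x.2 i
  · simpa [pastSeq, ht] using x.2 i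

lemma pastPoint_eq (t : ℝ) :
    pastPoint g x t = ⟨pastSeq g x t, pastSeq_isPath x hg0 hgsum t⟩ :=
  dif_pos _

lemma measurable_pastPoint : Measurable (pastPoint g x) := by
  rw [funext (pastPoint_eq x hg0 hgsum)]
  refine Measurable.subtype_mk
    (measurable_pi_lambda _ fun i => measurable_to_countable' fun v => ?_)
  by_cases hi : i < 0
  · have hpre : (fun t => pastSeq g x t i) ⁻¹' {v} =
        {t | t ∈ Ico (0 : ℝ) 1 ∧ pastLetter g x t (-(i + 1)).toNat = v} ∪
          ((Ico (0 : ℝ) 1)ᶜ ∩ {_t | x.1 i = v}) := by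
      ext t
      by_cases ht : t ∈ Ico (0 : ℝ) 1 <;>
        simp only [pastSeq, ht, hi, and_true, if_true, if_false, mem_preimage,
          mem_singleton_iff, mem_union, mem_inter_iff, mem_compl_iff, mem_ofPred_eq, true_and,
          not_true, not_false_eq_true, false_and, or_false, false_or]
    rw [hpre]
    exact (measurableSet_codingLetter_eq (predWeight_nonneg hg0)
      (hasSum_predWeight hgsum) _ _ _).union (measurableSet_Ico.compl.inter (.const _))
  · simp only [pastSeq, hi, and_false, if_false]
    exact measurableSet_preimage measurable_const (measurableSet_singleton v)

lemma pastPoint_mem_WsLoc (t : ℝ) : pastPoint g x t ∈ WsLoc G x := by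
  rw [pastPoint_eq x hg0 hgsum]
  intro i hi
  simp [pastSeq, not_lt.2 hi]

lemma pastPoint_val_neg {t : ℝ} (ht : t ∈ Ico (0 : ℝ) 1) (j : ℕ) :
    (pastPoint g x t).1 (-(j : ℤ) - 1) = pastLetter g x t j := by
  rw [pastPoint_eq x hg0 hgsum]
  simp only [pastSeq, ht, true_and, show -(j : ℤ) - 1 < 0 by omega, if_true]
  congr
  omega

lemma isProbabilityMeasure_condMeasure : IsProbabilityMeasure (condMeasure g x) := by
  have : IsProbabilityMeasure (volume.restrict (Ico (0 : ℝ) 1)) := ⟨by simp⟩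
  exact Measure.isProbabilityMeasure_map (measurable_pastPoint x hg0 hgsum).aemeasurable

lemma condMeasure_compl_WsLoc : condMeasure g x (WsLoc G x)ᶜ = 0 := by
  rw [condMeasure, Measure.map_apply (measurable_pastPoint x hg0 hgsum)
    (measurableSet_WsLoc x).compl]
  have hempty : pastPoint g x ⁻¹' (WsLoc G x)ᶜ = ∅ := by
    ext t
    simp [pastPoint_mem_WsLoc x hg0 hgsum]
  rw [hempty, measure_empty]

lemma condMeasure_cylZ {z : G.Space} (hz : z ∈ WsLoc G x) (n : ℕ) :
    condMeasure g x (cylZ G z (-n) (-1) ∩ WsLoc G x) =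
      ENNReal.ofReal (∏ j ∈ Finset.range n, g (G.tailOS z (-(j : ℤ) - 1))) := by
  have hmeas := measurable_pastPoint x hg0 hgsum
  have hset := (measurableSet_cylZ z (-n) (-1)).inter (measurableSet_WsLoc x)
  have hpre : pastPoint g x ⁻¹' (cylZ G z (-n) (-1) ∩ WsLoc G x) ∩ Ico 0 1 =
      {t | t ∈ Ico (0 : ℝ) 1 ∧ ∀ j < n, pastLetter g x t j = z.1 (-(j : ℤ) - 1)} := by
    ext t
    simp only [mem_inter_iff, mem_preimage, mem_ofPred_eq, pastPoint_mem_WsLoc x hg0 hgsum,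
      and_true]
    refine ⟨fun ⟨hcyl, ht⟩ => ⟨ht, fun j hj => ?_⟩,
      fun ⟨ht, hc⟩ => ⟨fun i hi1 hi2 => ?_, ht⟩⟩
    · rw [← pastPoint_val_neg x hg0 hgsum ht]
      exact hcyl _ (by omega) (by omega)
    · obtain ⟨j, rfl⟩ : ∃ j : ℕ, i = -(j : ℤ) - 1 := ⟨(-(i + 1)).toNat, by omega⟩
      rw [pastPoint_val_neg x hg0 hgsum ht]
      exact hc j (by omega)
  rw [condMeasure, Measure.map_apply hmeas hset, Measure.restrict_apply (hmeas hset), hpre]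
  refine (volume_codingCylinder (predWeight_nonneg hg0)
    (hasSum_predWeight hgsum) n _ _).trans (congrArg ENNReal.ofReal ?_)
  refine Finset.prod_congr rfl fun j _ => ?_
  rw [wordState_past hz, predWeight_of_edge (edge_tailOS z _), consOS_tailOS]

end Construction

section CondMeasure

variable (G) in
def IsCondMeasure (g : G.OS → ℝ) (x : G.Space) (m : Measure G.Space) : Prop :=
  IsProbabilityMeasure m ∧ m (WsLoc G x)ᶜ = 0 ∧
    ∀ z ∈ WsLoc G x, ∀ n : ℕ, 1 ≤ n →
      m (cylZ G z (-n) (-1) ∩ WsLoc G x) =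
        ENNReal.ofReal (∏ j ∈ Finset.range n, g (G.tailOS z (-(j : ℤ) - 1)))

variable {g : G.OS → ℝ} {x : G.Space}

lemma isCondMeasure_condMeasure [Nonempty G.V] (hg0 : ∀ y, 0 ≤ g y)
    (hgsum : ∀ x : G.OS, ∑' y : {y : G.OS // G.shiftOS y = x}, g y.1 = 1) (x : G.Space) :
    IsCondMeasure G g x (condMeasure g x) :=
  ⟨isProbabilityMeasure_condMeasure x hg0 hgsum, condMeasure_compl_WsLoc x hg0 hgsum,
    fun _ hz n _ => condMeasure_cylZ x hg0 hgsum hz n⟩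

lemma cylZ_inter_WsLoc {z : G.Space} (hz : z ∈ WsLoc G x) (n : ℕ) :
    cylZ G z (-n) n ∩ WsLoc G x = cylZ G z (-n) (-1) ∩ WsLoc G x := by
  ext y
  refine ⟨fun ⟨hy, hyW⟩ => ⟨fun i h1 h2 => hy i h1 (by omega), hyW⟩,
    fun ⟨hy, hyW⟩ => ⟨fun i h1 h2 => ?_, hyW⟩⟩
  by_cases hi : i < 0
  · exact hy i h1 (by omega)
  · exact (hyW i (by omega)).trans (hz i (by omega)).symm

lemma IsCondMeasure.measure_cylZ_eq {m₁ m₂ : Measure G.Space} (h₁ : IsCondMeasure G g x m₁)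
    (h₂ : IsCondMeasure G g x m₂) (z : G.Space) {n : ℕ} (hn : 1 ≤ n) :
    m₁ (cylZ G z (-n) n) = m₂ (cylZ G z (-n) n) := by
  obtain ⟨-, h₁0, h₁c⟩ := h₁
  obtain ⟨-, h₂0, h₂c⟩ := h₂
  rw [← measure_inter_conull h₁0, ← measure_inter_conull h₂0]
  rcases (cylZ G z (-n) n ∩ WsLoc G x).eq_empty_or_nonempty with he | ⟨y, hyz, hyW⟩
  · simp [he]
  · rw [← cylZ_eq_of_mem hyz, cylZ_inter_WsLoc hyW, h₁c y hyW n hn, h₂c y hyW n hn]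

theorem IsCondMeasure.unique {m₁ m₂ : Measure G.Space} (h₁ : IsCondMeasure G g x m₁)
    (h₂ : IsCondMeasure G g x m₂) : m₁ = m₂ :=
  have := h₁.1
  ext_of_cylZ fun z _ hn => h₁.measure_cylZ_eq h₂ z hn

lemma g_consOS_le_of_hasTwoPredecessors (hg0 : ∀ y, 0 ≤ g y)
    (hgsum : ∀ x : G.OS, ∑' y : {y : G.OS // G.shiftOS y = x}, g y.1 = 1) {c : ℝ}
    (hc : ∀ y, c ≤ g y) {u : G.OS} {a : G.V} (ha : G.E a (u.1 0))
    (h2 : HasTwoPredecessors (u.1 0)) : g (G.consOS a u) ≤ 1 - c := by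
  obtain ⟨b, hba, hb⟩ : ∃ b, b ≠ a ∧ G.E b (u.1 0) := by
    obtain ⟨b₁, b₂, hne, h₁, h₂⟩ := h2
    by_cases h : b₁ = a
    · exact ⟨b₂, fun h' => hne (h.trans h'.symm), h₂⟩
    · exact ⟨b₁, h, h₁⟩
  have hpair := sum_le_hasSum {a, b} (fun _ _ => predWeight_nonneg hg0 u _)
    (hasSum_predWeight hgsum u)
  rw [Finset.sum_pair hba.symm, predWeight_of_edge ha, predWeight_of_edge hb] at hpair
  linarith [hc (G.consOS b u)]

theorem IsCondMeasure.measure_singleton {m : Measure G.Space} (hT : TopTransitive G)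
    (hNC : ¬ IsCycleGraph G) (hg0 : ∀ y, 0 < g y) (hg1 : ∀ y, g y ≤ 1)
    (hgsum : ∀ x : G.OS, ∑' y : {y : G.OS // G.shiftOS y = x}, g y.1 = 1)
    (hlogbdd : ∃ M : ℝ, ∀ y, |Real.log (g y)| ≤ M) (hm : IsCondMeasure G g x m)
    (z : G.Space) : m {z} = 0 := by
  obtain ⟨-, hnull, hcyl⟩ := hm
  by_cases hz : z ∈ WsLoc G x
  swap
  · exact measure_mono_null (singleton_subset_iff.2 hz) hnull
  obtain ⟨M, hM⟩ := hlogbdd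
  have hlow : ∀ y, Real.exp (-M) ≤ g y := fun y => by
    rw [← Real.exp_log (hg0 y)]
    exact Real.exp_le_exp.2 (neg_le_of_abs_le (hM y))
  have hfreq : ∃ᶠ j : ℕ in atTop, g (G.tailOS z (-(j : ℤ) - 1)) ≤ 1 - Real.exp (-M) := by
    refine frequently_atTop.2 fun N => ?_
    obtain ⟨j, hjN, hj⟩ := exists_hasTwoPredecessors_past hT hNC z N
    refine ⟨j, hjN, ?_⟩
    rw [← consOS_tailOS]
    exact g_consOS_le_of_hasTwoPredecessors (fun y => (hg0 y).le) hgsum hlow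
      (edge_tailOS z _) (by simpa [tailOS] using hj)
  have hprod := tendsto_prod_range_zero_of_frequently_le (fun _ => (hg0 _).le) (fun _ => hg1 _)
    (by linarith [Real.exp_pos (-M)]) hfreq
  have hle : ∀ n : ℕ,
      m {z} ≤ ENNReal.ofReal (∏ j ∈ Finset.range (n + 1), g (G.tailOS z (-(j : ℤ) - 1))) :=
    fun n => by
      rw [← hcyl z hz (n + 1) n.succ_pos]
      exact measure_mono (singleton_subset_iff.2 ⟨fun _ _ _ => rfl, hz⟩)
  simpa using ge_of_tendsto' ((ENNReal.tendsto_ofReal hprod).comp (tendsto_add_atTop_nat 1)) hle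

end CondMeasure

end MarkovGraph

open MarkovGraph in
theorem statement8_general (G : MarkovGraph)
    (hTrans : TopTransitive G) (hNotCycle : ¬ IsCycleGraph G)
    (g : G.OS → ℝ) (hg0 : ∀ y, 0 < g y) (hg1 : ∀ y, g y ≤ 1)
    (hgsum : ∀ x : G.OS, ∑' y : {y : G.OS // G.shiftOS y = x}, g y.1 = 1)
    (hlogbdd : ∃ M : ℝ, ∀ y, |Real.log (g y)| ≤ M)
    (ν : Measure G.Space) :
    (∀ x : G.Space, ∃! m : Measure G.Space,
      IsProbabilityMeasure m ∧ m (WsLoc G x)ᶜ = 0 ∧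
      ∀ z ∈ WsLoc G x, ∀ n : ℕ, 1 ≤ n →
        m ({y : G.Space | ∀ i : ℤ, -(n : ℤ) ≤ i → i ≤ -1 → y.1 i = z.1 i} ∩ WsLoc G x) =
          ENNReal.ofReal (∏ j ∈ Finset.range n, g (tailOS G z (-(j : ℤ) - 1)))) ∧
    (∀ᵐ x ∂ν, ∀ m : Measure G.Space,
      (IsProbabilityMeasure m ∧ m (WsLoc G x)ᶜ = 0 ∧
        ∀ z ∈ WsLoc G x, ∀ n : ℕ, 1 ≤ n →
          m ({y : G.Space | ∀ i : ℤ, -(n : ℤ) ≤ i → i ≤ -1 → y.1 i = z.1 i} ∩ WsLoc G x) =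
            ENNReal.ofReal (∏ j ∈ Finset.range n, g (tailOS G z (-(j : ℤ) - 1)))) →
      ∀ z : G.Space, m {z} = 0) := by
  refine ⟨fun x => ?_, ae_of_all ν fun x m hm =>
    IsCondMeasure.measure_singleton hTrans hNotCycle hg0 hg1 hgsum hlogbdd hm⟩
  have : Nonempty G.V := ⟨x.1 0⟩
  have hcond := isCondMeasure_condMeasure (fun y => (hg0 y).le) hgsum x
  exact ⟨condMeasure g x, hcond, fun m hm => IsCondMeasure.unique hm hcond⟩

open MarkovGraph in
/-- Existence and uniqueness of the conditional measures ν(·|x_0^∞) on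
local stable sets determined by the `g`-function, and their non-atomicity for ν-a.e. x. -/
theorem statement8 (G : MarkovGraph)
    (hTrans : TopTransitive G) (hNotCycle : ¬ IsCycleGraph G)
    (g : G.OS → ℝ) (hg0 : ∀ y, 0 < g y) (hg1 : ∀ y, g y ≤ 1)
    (hgsum : ∀ x : G.OS, ∑' y : {y : G.OS // G.shiftOS y = x}, g y.1 = 1)
    (hlogbdd : ∃ M : ℝ, ∀ y, |Real.log (g y)| ≤ M)
    (hgHolder : ∃ C : ℝ, 0 < C ∧ ∃ θ : ℝ, 0 < θ ∧ θ < 1 ∧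
      ∀ (u v : G.OS) (k : ℕ), 1 ≤ k → (∀ i ≤ k, u.1 i = v.1 i) →
        |Real.log (g u) - Real.log (g v)| ≤ C * θ ^ k)
    (ν : Measure G.Space) (hνp : IsProbabilityMeasure ν)
    (hνinv : MeasurePreserving (fun z => G.shift z) ν ν)
    (hνerg : ∀ A : Set G.Space, MeasurableSet A → (fun z => G.shift z) ⁻¹' A = A →
      ν A = 0 ∨ ν A = 1)
    (hνpos : ∀ (x : G.Space) (a b : ℤ), 0 < ν (cylZ G x a b))
    (hcyl : ∀ (w : ℕ → G.V) (k : ℕ), 1 ≤ k → (∀ i < k, G.E (w i) (w (i + 1))) →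
      Measure.map (G.projOS) ν {y : G.OS | ∀ i ≤ k, y.1 i = w i} =
        ∫⁻ y in {y : G.OS | ∀ i ≤ k - 1, y.1 i = w (i + 1)},
          ENNReal.ofReal (g (G.consOS (w 0) y)) ∂(Measure.map (G.projOS) ν)) :
    (∀ x : G.Space, ∃! m : Measure G.Space,
      IsProbabilityMeasure m ∧ m (WsLoc G x)ᶜ = 0 ∧
      ∀ z ∈ WsLoc G x, ∀ n : ℕ, 1 ≤ n →
        m ({y : G.Space | ∀ i : ℤ, -(n : ℤ) ≤ i → i ≤ -1 → y.1 i = z.1 i} ∩ WsLoc G x) =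
          ENNReal.ofReal (∏ j ∈ Finset.range n, g (tailOS G z (-(j : ℤ) - 1)))) ∧
    (∀ᵐ x ∂ν, ∀ m : Measure G.Space,
      (IsProbabilityMeasure m ∧ m (WsLoc G x)ᶜ = 0 ∧
        ∀ z ∈ WsLoc G x, ∀ n : ℕ, 1 ≤ n →
          m ({y : G.Space | ∀ i : ℤ, -(n : ℤ) ≤ i → i ≤ -1 → y.1 i = z.1 i} ∩ WsLoc G x) =
            ENNReal.ofReal (∏ j ∈ Finset.range n, g (tailOS G z (-(j : ℤ) - 1)))) →
      ∀ z : G.Space, m {z} = 0) :=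
  statement8_general G hTrans hNotCycle g hg0 hg1 hgsum hlogbdd ν
end

section
/- Let (X,ℬ,μ) and (Y,𝒞,ν) be non-atomic Lebesgue probability spaces, and let {α_i}_{i=1}^n and {β_i}_{i=1}^n be finite sequences of ordered measurable partitions of X and Y respectively, each partition having N elements. If θ:(X,ℬ,μ)→(Y,𝒞,ν) is an ε-measure-preserving invertible measurable map such that (1/n)·Σ_{i=1}^n 1[α_i(x) ≠ β_i(θ(x))] ≤ ε holds on a set of μ-measure at least 1−ε, then the d-bar distance satisfies d̄({α_i}_{i=1}^n, {β_i}_{i=1}^n) ≤ 16ε. -/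
open MeasureTheory Filter Set
open scoped Classical

/-- An ordered measurable partition with `N` elements. -/
def IsOrdPartition {X : Type*} [MeasurableSpace X] {N : ℕ} (p : Fin N → Set X) : Prop :=
  (∀ j, MeasurableSet (p j)) ∧ (∀ j j', j ≠ j' → Disjoint (p j) (p j')) ∧
    (⋃ j, p j) = Set.univ

/-- The partition distance `d(α,β) = Σ_j μ(A_j Δ B_j)`. -/
noncomputable def partDist {X : Type*} [MeasurableSpace X] (μ : Measure X) {N : ℕ}
    (p q : Fin N → Set X) : ℝ :=
  ∑ j : Fin N, (μ (symmDiff (p j) (q j))).toReal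

/-- Two sequences of ordered partitions have the same distribution. -/
def SameDist {X Y : Type*} [MeasurableSpace X] [MeasurableSpace Y]
    (μ : Measure X) (ν : Measure Y) {n N : ℕ}
    (α : Fin n → Fin N → Set X) (β : Fin n → Fin N → Set Y) : Prop :=
  ∀ idx : Fin n → Fin N, μ (⋂ i, α i (idx i)) = ν (⋂ i, β i (idx i))

/-- The d-bar distance between two sequences of ordered partitions. -/
noncomputable def dbar {X Y : Type*} [MeasurableSpace X] [MeasurableSpace Y]
    (μ : Measure X) (ν : Measure Y) {n N : ℕ}
    (α : Fin n → Fin N → Set X) (β : Fin n → Fin N → Set Y) : ℝ :=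
  sInf {d : ℝ | ∃ α' : Fin n → Fin N → Set Y, (∀ i, IsOrdPartition (α' i)) ∧
    SameDist μ ν α α' ∧ d = (1 / (n : ℝ)) * ∑ i : Fin n, partDist ν (α' i) (β i)}

/-- `θ` is ε-measure-preserving: off a set of measure `< ε`, it distorts measures by a
factor `1 ± ε`. -/
def EpsMeasurePreserving {X Y : Type*} [MeasurableSpace X] [MeasurableSpace Y]
    (μ : Measure X) (ν : Measure Y) (θ : X ≃ᵐ Y) (ε : ℝ) : Prop :=
  ∃ E : Set X, MeasurableSet E ∧ μ E < ENNReal.ofReal ε ∧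
    ∀ A : Set X, MeasurableSet A → A ⊆ Eᶜ →
      ENNReal.ofReal (1 - ε) * μ A ≤ ν (⇑θ '' A) ∧
        ν (⇑θ '' A) ≤ ENNReal.ofReal (1 + ε) * μ A

/-!
Let `A t = ⋂ i, α i (t i)` be the cells of the common refinement of the `α i`, indexed by names
`t : Fin n → Fin N`. As `ν` has no atoms, `Y` can be cut into cells `C t` with
`ν (C t) = μ (A t)` such that each `C t` contains as much of `θ (A t)` as possible. Labelling
`C t` by the `i`-th letter of `t` gives partitions `α' i` of `Y` with the same joint
distribution as the `α i`. Since `θ` nearly preserves measure, the set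
`W = ⋃ t, C t \ θ (A t)` has measure at most `2ε`, and off `W ∪ θ {α i ≠ β i ∘ θ}` the
partitions `α' i` and `β i` agree, so `d(α' i, β i) ≤ 2 ν (W ∪ θ {α i ≠ β i ∘ θ})`.
Finally, let `G` be the set of points where at most `εn` of the indices mismatch and `E` the
exceptional set of `θ`. A point of `θ (G \ E)`, a set of measure at least `1 - 3ε`, lies in at
most `εn` of the sets `θ {α i ≠ β i ∘ θ}`, so these have total measure at most `4εn`, and
`∑ i, d(α' i, β i) ≤ 12εn`.
-/

open scoped ENNReal Topology symmDiff Function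

theorem Pairwise.disjoint_update {ι α : Type*} [DecidableEq ι] {f : ι → Set α}
    (hf : Pairwise (Disjoint on f)) {a : ι} {s : Set α} (hs : ∀ i ≠ a, Disjoint s (f i)) :
    Pairwise (Disjoint on Function.update f a s) := by
  intro i j hij
  rcases eq_or_ne i a with rfl | hi
  · simpa [Function.onFun, Function.update_of_ne hij.symm] using hs j hij.symm
  rcases eq_or_ne j a with rfl | hj
  · simpa [Function.onFun, Function.update_of_ne hij] using (hs i hi).symm
  simpa [Function.onFun, Function.update_of_ne hi, Function.update_of_ne hj] using hf hij

namespace MeasureTheory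

variable {X Y : Type*} [MeasurableSpace X] [MeasurableSpace Y]

structure IsMeasurablePartition {ι : Type*} (A : ι → Set X) : Prop where
  measurableSet : ∀ i, MeasurableSet (A i)
  pairwise_disjoint : Pairwise (Disjoint on A)
  iUnion_eq_univ : ⋃ i, A i = univ

namespace IsMeasurablePartition

variable {ι : Type*} {A : ι → Set X}

theorem exists_mem (hA : IsMeasurablePartition A) (x : X) : ∃ i, x ∈ A i :=
  mem_iUnion.1 (hA.iUnion_eq_univ ▸ mem_univ x)

theorem eq_of_mem (hA : IsMeasurablePartition A) {x : X} {i j : ι} (hi : x ∈ A i)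
    (hj : x ∈ A j) : i = j :=
  by_contra fun h => disjoint_left.1 (hA.pairwise_disjoint h) hi hj

variable [Fintype ι]

theorem sum_measure_inter (hA : IsMeasurablePartition A) (μ : Measure X) {S : Set X}
    (hS : MeasurableSet S) : ∑ i, μ (A i ∩ S) = μ S := by
  rw [← tsum_fintype (L := .unconditional _), ← measure_iUnion (fun i j h =>
    (hA.pairwise_disjoint h).mono inter_subset_left inter_subset_left)
    (fun i => (hA.measurableSet i).inter hS), ← iUnion_inter, hA.iUnion_eq_univ, univ_inter]

theorem sum_measure (hA : IsMeasurablePartition A) (μ : Measure X) :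
    ∑ i, μ (A i) = μ univ := by
  simpa using hA.sum_measure_inter μ MeasurableSet.univ

theorem sum_measureReal_inter (hA : IsMeasurablePartition A) (μ : Measure X) [IsFiniteMeasure μ]
    {S : Set X} (hS : MeasurableSet S) : ∑ i, μ.real (A i ∩ S) = μ.real S := by
  simp_rw [measureReal_def, ← ENNReal.toReal_sum fun i _ => measure_ne_top _ _,
    hA.sum_measure_inter μ hS]

end IsMeasurablePartition

theorem continuous_measure_Iic (m : Measure ℝ) [IsFiniteMeasure m] [NullSingletonClass m] :
    Continuous fun t => m (Iic t) := by
  let path : ℝ → MeasuredSets m := fun t => ⟨Iic t, measurableSet_Iic⟩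
  suffices Continuous path from MeasuredSets.continuous_measure.comp this
  refine continuous_iff_continuousAt.2 fun b => tendsto_iff_edist_tendsto_0.2 ?_
  have hδ : Tendsto (fun t => |t - b|) (𝓝 b) (𝓝 0) := by
    simpa using ((continuous_id.sub continuous_const).abs.tendsto b :
      Tendsto (fun t : ℝ => |t - b|) _ _)
  refine tendsto_of_tendsto_of_tendsto_of_le_of_le tendsto_const_nhds
    ((tendsto_measure_Icc m b).comp hδ) (fun _ => bot_le) fun t => measure_mono ?_
  intro x (hx : x ∈ Iic t ∆ Iic b)
  simp only [mem_symmDiff, mem_Iic, not_le] at hx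
  rcases hx with ⟨h₁, h₂⟩ | ⟨h₁, h₂⟩ <;> constructor <;>
    linarith [le_abs_self (t - b), neg_abs_le (t - b)]

theorem exists_subset_measure_eq [StandardBorelSpace Y] (ν : Measure Y) [IsFiniteMeasure ν]
    [NullSingletonClass ν] {A : Set Y} (hA : MeasurableSet A) {c : ℝ≥0∞} (hc : c ≤ ν A) :
    ∃ B ⊆ A, MeasurableSet B ∧ ν B = c := by
  obtain ⟨φ, hφ⟩ := exists_measurableEmbedding_real Y
  -- `arctan` squeezes the values into `(-2, 2)`, so the distribution function of the image of
  -- `ν.restrict A` runs from `0` at `-2` to `ν A` at `2`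
  set g := Real.arctan ∘ φ
  have hg : Measurable g := Real.continuous_arctan.measurable.comp hφ.measurable
  have hg2 : ∀ y, g y ∈ Ioo (-2) 2 := fun y => by
    have := Real.arctan_mem_Ioo (φ y)
    constructor <;> simp only [g, Function.comp_apply] <;>
      linarith [this.1, this.2, Real.pi_lt_four]
  set m := (ν.restrict A).map g
  have hm : ∀ t, m (Iic t) = ν (A ∩ g ⁻¹' Iic t) := fun t => by
    rw [Measure.map_apply hg measurableSet_Iic, Measure.restrict_apply (hg measurableSet_Iic),
      inter_comm]
  have : NullSingletonClass m := ⟨fun r => by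
    rw [Measure.map_apply hg (measurableSet_singleton r)]
    exact (subsingleton_singleton.preimage
      (Real.arctan_injective.comp hφ.injective)).measure_zero _⟩
  have hlow : m (Iic (-2)) = 0 := by
    rw [hm, ← measure_empty (μ := ν)]
    congr; ext y; simpa using fun _ => (hg2 y).1
  have hhigh : m (Iic 2) = ν A := by
    rw [hm]; congr; ext y; simpa using fun _ => (hg2 y).2.le
  obtain ⟨t, -, ht⟩ := intermediate_value_Icc (by norm_num : (-2 : ℝ) ≤ 2)
    (continuous_measure_Iic m).continuousOn
    (show c ∈ Icc _ _ by rw [hlow, hhigh]; exact ⟨bot_le, hc⟩)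
  exact ⟨A ∩ g ⁻¹' Iic t, inter_subset_left, hA.inter (hg measurableSet_Iic), (hm t).symm.trans ht⟩

theorem exists_pairwise_disjoint_subsets_measure_eq [StandardBorelSpace Y] (ν : Measure Y)
    [IsFiniteMeasure ν] [NullSingletonClass ν] {ι : Type*} (w : ι → ℝ≥0∞) (s : Finset ι) :
    ∀ {A : Set Y}, MeasurableSet A → ∑ i ∈ s, w i ≤ ν A →
      ∃ C : ι → Set Y, (∀ i, MeasurableSet (C i)) ∧ (∀ i, C i ⊆ A) ∧
        Pairwise (Disjoint on C) ∧ ∀ i ∈ s, ν (C i) = w i := by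
  induction s using Finset.induction_on with
  | empty =>
    exact fun _ _ => ⟨fun _ => ∅, fun _ => .empty, fun _ => empty_subset _,
      fun _ _ _ => disjoint_bot_left, by simp⟩
  | insert a s ha ih =>
    intro A hA hw
    rw [Finset.sum_insert ha] at hw
    obtain ⟨B, hBA, hBm, hBν⟩ := exists_subset_measure_eq ν hA (le_self_add.trans hw)
    have hwB : ∑ i ∈ s, w i ≤ ν (A \ B) := by
      rw [measure_sdiff hBA hBm.nullMeasurableSet (measure_ne_top _ _), hBν]
      exact ENNReal.le_sub_of_add_le_left (hBν ▸ measure_ne_top ν B) hw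
    obtain ⟨C, hCm, hCA, hCd, hCν⟩ := ih (hA.diff hBm) hwB
    refine ⟨Function.update C a B, fun i => ?_, fun i => ?_,
      hCd.disjoint_update fun i _ => disjoint_sdiff_right.mono_right (hCA i), fun i hi => ?_⟩
    · rcases eq_or_ne i a with rfl | h <;> simp [*]
    · rcases eq_or_ne i a with rfl | h
      · simpa using hBA
      · simpa [h] using (hCA i).trans sdiff_subset
    · rcases Finset.mem_insert.1 hi with rfl | hi
      · simpa using hBν
      · simpa [ne_of_mem_of_not_mem hi ha] using hCν i hi

theorem exists_partition_ae_eq {T : Type*} [Fintype T] [Nonempty T] (ν : Measure Y)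
    [IsFiniteMeasure ν] {D : T → Set Y} (hDm : ∀ t, MeasurableSet (D t))
    (hDd : Pairwise (Disjoint on D)) (hD : ∑ t, ν (D t) = ν univ) :
    ∃ C : T → Set Y, IsMeasurablePartition C ∧ ∀ t, C t =ᵐ[ν] D t := by
  set L := (⋃ t, D t)ᶜ
  have hL : ν L = 0 := by
    rw [measure_compl (MeasurableSet.iUnion hDm) (measure_ne_top _ _),
      measure_iUnion hDd hDm, tsum_fintype, hD, tsub_self]
  have hLD : ∀ t, Disjoint L (D t) := fun t => disjoint_compl_left.mono_right (subset_iUnion D t)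
  obtain ⟨t₀⟩ := ‹Nonempty T›
  set C := Function.update D t₀ (D t₀ ∪ L)
  have hDC : ∀ t, D t ⊆ C t := fun t => by
    rcases eq_or_ne t t₀ with rfl | h
    · simp [C]
    · simp [C, h]
  refine ⟨C, ⟨fun t => ?_, hDd.disjoint_update fun t ht =>
    disjoint_union_left.2 ⟨hDd ht.symm, hLD t⟩, eq_univ_of_forall fun y => ?_⟩, fun t => ?_⟩
  · rcases eq_or_ne t t₀ with rfl | h
    · simpa [C, L] using (hDm t).union (MeasurableSet.iUnion hDm).compl
    · simpa [C, h] using hDm t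
  · by_cases hy : y ∈ ⋃ t, D t
    · obtain ⟨t, ht⟩ := mem_iUnion.1 hy
      exact mem_iUnion.2 ⟨t, hDC t ht⟩
    · exact mem_iUnion.2 ⟨t₀, by simpa [C] using Or.inr (show y ∈ L from hy)⟩
  · rcases eq_or_ne t t₀ with rfl | h
    · simpa [C] using union_ae_eq_left_of_ae_eq_empty (ae_eq_empty.2 hL)
    · simp only [C, Function.update_of_ne h]
      exact EventuallyEq.rfl

theorem exists_partition_measure_eq_min_le_measure_inter [StandardBorelSpace Y] (ν : Measure Y)
    [IsProbabilityMeasure ν] [NullSingletonClass ν] {T : Type*} [Fintype T] {Q : T → Set Y}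
    (hQm : ∀ t, MeasurableSet (Q t)) (hQd : Pairwise (Disjoint on Q)) {p : T → ℝ≥0∞}
    (hp : ∑ t, p t = 1) :
    ∃ C : T → Set Y, IsMeasurablePartition C ∧
      ∀ t, ν (C t) = p t ∧ min (p t) (ν (Q t)) ≤ ν (C t ∩ Q t) := by
  have : Nonempty T := by
    by_contra h
    simp [not_nonempty_iff.1 h] at hp
  -- `C t` is a largest possible piece `S t` of `Q t`, topped up from the complement of `⋃ S`
  choose S hSQ hSm hSν using
    fun t => exists_subset_measure_eq ν (hQm t) (min_le_right (p t) (ν (Q t)))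
  have hSd : Pairwise (Disjoint on S) := fun t t' h => (hQd h).mono (hSQ t) (hSQ t')
  have hSp : ∀ t, ν (S t) ≤ p t := fun t => (hSν t).trans_le (min_le_left _ _)
  have hR : ∑ t, (p t - ν (S t)) ≤ ν (⋃ t, S t)ᶜ := by
    rw [measure_compl (MeasurableSet.iUnion hSm) (measure_ne_top _ _), measure_iUnion hSd hSm,
      tsum_fintype, measure_univ, ← hp]
    refine ENNReal.le_sub_of_add_le_right (ENNReal.sum_ne_top.2 fun t _ => measure_ne_top _ _) ?_
    rw [← Finset.sum_add_distrib]
    exact (Finset.sum_congr rfl fun t _ => tsub_add_cancel_of_le (hSp t)).le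
  obtain ⟨R, hRm, hRS, hRd, hRν⟩ := exists_pairwise_disjoint_subsets_measure_eq ν _
    Finset.univ (MeasurableSet.iUnion hSm).compl hR
  have hSR : ∀ t t', Disjoint (S t) (R t') := fun t t' =>
    (disjoint_compl_right.mono_left (subset_iUnion S t)).mono_right (hRS t')
  set D : T → Set Y := fun t => S t ∪ R t
  have hDd : Pairwise (Disjoint on D) := fun t t' h =>
    disjoint_union_left.2 ⟨disjoint_union_right.2 ⟨hSd h, hSR t t'⟩,
      disjoint_union_right.2 ⟨(hSR t' t).symm, hRd h⟩⟩
  have hDν : ∀ t, ν (D t) = p t := fun t => by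
    rw [measure_union (hSR t t) (hRm t), hRν t (Finset.mem_univ t), add_tsub_cancel_of_le (hSp t)]
  obtain ⟨C, hC, hCD⟩ := exists_partition_ae_eq ν (D := D)
    (fun t => (hSm t).union (hRm t)) hDd (by simp_rw [hDν, hp, measure_univ])
  refine ⟨C, hC, fun t => ⟨(measure_congr (hCD t)).trans (hDν t), ?_⟩⟩
  rw [← hSν t, measure_congr ((hCD t).inter (ae_eq_refl (Q t)))]
  exact measure_mono (subset_inter subset_union_left (hSQ t))

section Counting

variable {ι : Type*} [Fintype ι] {U : ι → Set X}

theorem sum_measure_le_of_ae_card_le (μ : Measure X) (hU : ∀ i, MeasurableSet (U i))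
    {K : ℝ≥0∞} (h : ∀ᵐ x ∂μ, ((Finset.univ.filter fun i => x ∈ U i).card : ℝ≥0∞) ≤ K) :
    ∑ i, μ (U i) ≤ K * μ univ := by
  calc ∑ i, μ (U i) = ∫⁻ x, ∑ i, (U i).indicator 1 x ∂μ := by
        rw [lintegral_finsetSum (f := fun i => (U i).indicator 1) _
          fun i _ => measurable_one.indicator (hU i)]
        simp [lintegral_indicator_one (hU _)]
    _ = ∫⁻ x, ((Finset.univ.filter fun i => x ∈ U i).card : ℝ≥0∞) ∂μ := by
        simp [indicator_apply, Finset.sum_boole]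
    _ ≤ ∫⁻ _, K ∂μ := lintegral_mono_ae h
    _ = K * μ univ := lintegral_const K

theorem sum_measureReal_le_of_card_le_on (μ : Measure X) [IsProbabilityMeasure μ]
    (hU : ∀ i, MeasurableSet (U i)) {H : Set X} (hH : MeasurableSet H) {K : ℝ} (hK : 0 ≤ K)
    (hcard : ∀ x ∈ H, ((Finset.univ.filter fun i => x ∈ U i).card : ℝ) ≤ K) :
    ∑ i, μ.real (U i) ≤ K + Fintype.card ι * μ.real Hᶜ := by
  have hon : ∑ i, μ.restrict H (U i) ≤ ENNReal.ofReal K * μ.restrict H univ :=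
    sum_measure_le_of_ae_card_le _ hU <| (ae_restrict_iff' hH).2 <| .of_forall fun x hx => by
      rw [← ENNReal.ofReal_natCast]; exact ENNReal.ofReal_le_ofReal (hcard x hx)
  have hoff : ∑ i, μ.restrict Hᶜ (U i) ≤ Fintype.card ι * μ.restrict Hᶜ univ :=
    sum_measure_le_of_ae_card_le _ hU <| .of_forall fun x => by
      exact_mod_cast Finset.card_filter_le _ _
  have hsum : ∑ i, μ (U i) ≤ ENNReal.ofReal K + Fintype.card ι * μ Hᶜ := by
    calc ∑ i, μ (U i) = ∑ i, μ.restrict H (U i) + ∑ i, μ.restrict Hᶜ (U i) := by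
          rw [← Finset.sum_add_distrib]
          simp_rw [← Measure.add_apply, Measure.restrict_add_restrict_compl hH]
      _ ≤ ENNReal.ofReal K * μ H + Fintype.card ι * μ Hᶜ := by
          simpa using add_le_add hon hoff
      _ ≤ ENNReal.ofReal K + Fintype.card ι * μ Hᶜ := by
          gcongr; exact mul_le_of_le_one_right' prob_le_one
  calc ∑ i, μ.real (U i) = (∑ i, μ (U i)).toReal :=
        (ENNReal.toReal_sum fun i _ => measure_ne_top _ _).symm
    _ ≤ (ENNReal.ofReal K + Fintype.card ι * μ Hᶜ).toReal :=
        ENNReal.toReal_mono (by finiteness) hsum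
    _ = K + Fintype.card ι * μ.real Hᶜ := by
        rw [ENNReal.toReal_add (by finiteness) (by finiteness), ENNReal.toReal_ofReal hK,
          ENNReal.toReal_mul, measureReal_def]
        simp

theorem measurableSet_card_filter_le (hU : ∀ i, MeasurableSet (U i)) (K : ℝ) :
    MeasurableSet {x | ((Finset.univ.filter fun i => x ∈ U i).card : ℝ) ≤ K} := by
  simp_rw [Finset.natCast_card_filter]
  exact measurableSet_le (Finset.measurable_sum _ fun i _ =>
    Measurable.ite (hU i) measurable_const measurable_const) measurable_const

end Counting

end MeasureTheory

section Partitions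

variable {X Y : Type*} [MeasurableSpace X] [MeasurableSpace Y]

theorem IsOrdPartition.isMeasurablePartition {N : ℕ} {p : Fin N → Set X}
    (hp : IsOrdPartition p) : IsMeasurablePartition p :=
  ⟨hp.1, fun j j' h => hp.2.1 j j' h, hp.2.2⟩

theorem MeasureTheory.IsMeasurablePartition.isOrdPartition {N : ℕ} {p : Fin N → Set X}
    (hp : IsMeasurablePartition p) : IsOrdPartition p :=
  ⟨hp.measurableSet, fun _ _ h => hp.pairwise_disjoint h, hp.iUnion_eq_univ⟩

variable {ι κ : Type*}

def jointCell (α : ι → κ → Set X) (t : ι → κ) : Set X :=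
  ⋂ i, α i (t i)

def coordPartition (C : (ι → κ) → Set Y) (i : ι) (j : κ) : Set Y :=
  ⋃ (t) (_ : t i = j), C t

theorem isMeasurablePartition_jointCell [Countable ι] {α : ι → κ → Set X}
    (hα : ∀ i, IsMeasurablePartition (α i)) : IsMeasurablePartition (jointCell α) where
  measurableSet t := MeasurableSet.iInter fun i => (hα i).measurableSet _
  pairwise_disjoint t t' h := by
    obtain ⟨i, hi⟩ := Function.ne_iff.1 h
    exact ((hα i).pairwise_disjoint hi).mono (iInter_subset _ i) (iInter_subset _ i)
  iUnion_eq_univ := eq_univ_of_forall fun x => by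
    choose t ht using fun i => (hα i).exists_mem x
    exact mem_iUnion.2 ⟨t, mem_iInter.2 ht⟩

namespace MeasureTheory.IsMeasurablePartition

variable {C : (ι → κ) → Set Y}

theorem coordPartition [Countable (ι → κ)] (hC : IsMeasurablePartition C) (i : ι) :
    IsMeasurablePartition (coordPartition C i) where
  measurableSet j := .iUnion fun t => .iUnion fun _ => hC.measurableSet t
  pairwise_disjoint j j' h := by
    simp only [Function.onFun, _root_.coordPartition, disjoint_iUnion_left, disjoint_iUnion_right]
    rintro t rfl t' rfl
    exact hC.pairwise_disjoint fun e => h (e ▸ rfl)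
  iUnion_eq_univ := eq_univ_of_forall fun y => by
    obtain ⟨t, ht⟩ := hC.exists_mem y
    exact mem_iUnion.2 ⟨t i, mem_iUnion₂.2 ⟨t, rfl, ht⟩⟩

theorem jointCell_coordPartition (hC : IsMeasurablePartition C) (t : ι → κ) :
    jointCell (_root_.coordPartition C) t = C t := by
  refine Subset.antisymm (fun y hy => ?_) fun y hy =>
    mem_iInter.2 fun i => mem_iUnion₂.2 ⟨t, rfl, hy⟩
  obtain ⟨s, hs⟩ := hC.exists_mem y
  suffices s = t from this ▸ hs
  funext i
  obtain ⟨s', hs'i, hys'⟩ := mem_iUnion₂.1 (mem_iInter.1 hy i)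
  rw [hC.eq_of_mem hs hys', hs'i]

end MeasureTheory.IsMeasurablePartition

theorem partDist_le_two_mul_measureReal (μ : Measure X) [IsFiniteMeasure μ] {N : ℕ}
    {p q : Fin N → Set X} (hp : IsMeasurablePartition p) (hq : IsMeasurablePartition q)
    {D : Set X} (hD : MeasurableSet D) (h : ∀ j, p j \ D ⊆ q j) :
    partDist μ p q ≤ 2 * μ.real D := by
  have hsub : ∀ j, p j ∆ q j ⊆ (p j ∩ D) ∪ (q j ∩ D) := by
    rintro j y (⟨hyp, hyq⟩ | ⟨hyq, hyp⟩)
    · exact Or.inl ⟨hyp, by_contra fun hyD => hyq (h j ⟨hyp, hyD⟩)⟩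
    · refine Or.inr ⟨hyq, by_contra fun hyD => ?_⟩
      obtain ⟨k, hk⟩ := hp.exists_mem y
      exact hyp (hq.eq_of_mem (h k ⟨hk, hyD⟩) hyq ▸ hk)
  calc partDist μ p q = ∑ j, μ.real (p j ∆ q j) := rfl
    _ ≤ ∑ j, (μ.real (p j ∩ D) + μ.real (q j ∩ D)) := Finset.sum_le_sum fun j _ =>
        (measureReal_mono (hsub j)).trans (measureReal_union_le _ _)
    _ = 2 * μ.real D := by
        rw [Finset.sum_add_distrib, hp.sum_measureReal_inter μ hD, hq.sum_measureReal_inter μ hD]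
        ring

theorem coordPartition_sdiff_subset {α : ι → κ → Set X} (hα : ∀ i, Pairwise (Disjoint on α i))
    {β : ι → κ → Set Y} (θ : X ≃ᵐ Y) {C : (ι → κ) → Set Y} (i : ι) (j : κ) :
    coordPartition C i j \ ((⋃ t, C t \ θ.symm ⁻¹' jointCell α t) ∪
      θ.symm ⁻¹' {x | ∀ j, x ∈ α i j → θ x ∉ β i j}) ⊆ β i j := by
  rintro y ⟨hy, hyW⟩
  obtain ⟨t, rfl, hyt⟩ := mem_iUnion₂.1 hy
  simp only [mem_union, mem_iUnion, Set.mem_sdiff, mem_preimage, mem_ofPred_eq, not_or,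
    not_exists, not_and, not_not, not_forall, MeasurableEquiv.apply_symm_apply] at hyW
  obtain ⟨hQ, j', hj', hyj'⟩ := hyW
  have hx : θ.symm y ∈ α i (t i) := mem_iInter.1 (hQ t hyt) i
  obtain rfl : j' = t i := by_contra fun h => disjoint_left.1 (hα i h) hj' hx
  exact hyj'

theorem measurableSet_mismatch [Countable κ] {α : ι → κ → Set X} {β : ι → κ → Set Y}
    (hα : ∀ i j, MeasurableSet (α i j)) (hβ : ∀ i j, MeasurableSet (β i j)) (θ : X ≃ᵐ Y)
    (i : ι) : MeasurableSet {x | ∀ j, x ∈ α i j → θ x ∉ β i j} := by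
  simp only [ofPred_forall, imp_iff_not_or]
  exact .iInter fun j => (hα i j).compl.union (θ.measurable (hβ i j).compl)

end Partitions

section Distances

variable {X Y : Type*} [MeasurableSpace X] [MeasurableSpace Y] {μ : Measure X} {ν : Measure Y}
  {θ : X ≃ᵐ Y} {ε : ℝ} {E : Set X}

theorem dbar_le_of_sameDist {n N : ℕ} {α : Fin n → Fin N → Set X}
    {β α' : Fin n → Fin N → Set Y} (hα' : ∀ i, IsOrdPartition (α' i)) (h : SameDist μ ν α α') :
    dbar μ ν α β ≤ 1 / n * ∑ i, partDist ν (α' i) (β i) := by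
  refine csInf_le ⟨0, ?_⟩ ⟨α', hα', h, rfl⟩
  rintro d ⟨α'', -, -, rfl⟩
  exact mul_nonneg (by positivity)
    (Finset.sum_nonneg fun i _ => Finset.sum_nonneg fun j _ => ENNReal.toReal_nonneg)

theorem EpsMeasurePreserving.pos (h : EpsMeasurePreserving μ ν θ ε) : 0 < ε := by
  obtain ⟨E, -, hE, -⟩ := h
  exact ENNReal.ofReal_pos.1 (bot_le.trans_lt hE)

theorem EpsMeasurePreserving.exists_measureReal_le [IsFiniteMeasure ν]
    (h : EpsMeasurePreserving μ ν θ ε) :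
    ∃ E, MeasurableSet E ∧ μ.real E ≤ ε ∧ ∀ A, MeasurableSet A → A ⊆ Eᶜ →
      μ.real A ≤ ν.real (θ.symm ⁻¹' A) + ε * μ.real A := by
  have hε := h.pos
  obtain ⟨E, hEm, hE, hθ⟩ := h
  refine ⟨E, hEm, ENNReal.toReal_le_of_le_ofReal hε.le hE.le, fun A hA hAE => ?_⟩
  have h₁ : max (1 - ε) 0 * μ.real A ≤ ν.real (θ.symm ⁻¹' A) := by
    rw [← θ.image_eq_preimage_symm, measureReal_def, measureReal_def, ← ENNReal.toReal_ofReal',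
      ← ENNReal.toReal_mul]
    exact ENNReal.toReal_mono (measure_ne_top _ _) (hθ A hA hAE).1
  nlinarith [le_max_left (1 - ε) 0, measureReal_nonneg (μ := μ) (s := A)]

theorem measureReal_sdiff_preimage_le [IsFiniteMeasure μ] [IsFiniteMeasure ν] (hε : 0 ≤ ε)
    (hE : MeasurableSet E)
    (hθE : ∀ A, MeasurableSet A → A ⊆ Eᶜ → μ.real A ≤ ν.real (θ.symm ⁻¹' A) + ε * μ.real A)
    {A : Set X} (hA : MeasurableSet A) {C : Set Y} (hCν : ν C = μ A)
    (hCA : min (μ A) (ν (θ.symm ⁻¹' A)) ≤ ν (C ∩ θ.symm ⁻¹' A)) :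
    ν.real (C \ θ.symm ⁻¹' A) ≤ ε * μ.real (A \ E) + μ.real (A ∩ E) := by
  have hC : ν.real (C ∩ θ.symm ⁻¹' A) + ν.real (C \ θ.symm ⁻¹' A) = μ.real A := by
    rw [measureReal_inter_add_sdiff (θ.symm.measurable hA), measureReal_def, hCν, measureReal_def]
  have hCA' : min (μ.real A) (ν.real (θ.symm ⁻¹' A)) ≤ ν.real (C ∩ θ.symm ⁻¹' A) := by
    simpa [measureReal_def, ENNReal.toReal_min] using ENNReal.toReal_mono (by finiteness) hCA
  have hAE := hθE _ (hA.diff hE) fun _ hx => hx.2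
  have hmono : ν.real (θ.symm ⁻¹' (A \ E)) ≤ ν.real (θ.symm ⁻¹' A) :=
    measureReal_mono (preimage_mono sdiff_subset)
  have hsplit := measureReal_sdiff_add_inter (μ := μ) (s := A) hE
  have : 0 ≤ ε * μ.real (A \ E) := by positivity
  have : 0 ≤ μ.real (A ∩ E) := measureReal_nonneg
  have : μ.real A - ε * μ.real (A \ E) - μ.real (A ∩ E) ≤
      min (μ.real A) (ν.real (θ.symm ⁻¹' A)) :=
    le_min (by linarith) (by linarith)
  linarith

theorem measureReal_iUnion_sdiff_preimage_le [IsProbabilityMeasure μ] [IsFiniteMeasure ν]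
    (hε : 0 ≤ ε) (hE : MeasurableSet E) (hEμ : μ.real E ≤ ε)
    (hθE : ∀ A, MeasurableSet A → A ⊆ Eᶜ → μ.real A ≤ ν.real (θ.symm ⁻¹' A) + ε * μ.real A)
    {T : Type*} [Fintype T] {A : T → Set X} (hA : IsMeasurablePartition A) {C : T → Set Y}
    (hCν : ∀ t, ν (C t) = μ (A t))
    (hCA : ∀ t, min (μ (A t)) (ν (θ.symm ⁻¹' A t)) ≤ ν (C t ∩ θ.symm ⁻¹' A t)) :
    ν.real (⋃ t, C t \ θ.symm ⁻¹' A t) ≤ 2 * ε := by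
  calc ν.real (⋃ t, C t \ θ.symm ⁻¹' A t) ≤ ∑ t, ν.real (C t \ θ.symm ⁻¹' A t) :=
        measureReal_iUnion_fintype_le _
    _ ≤ ∑ t, (ε * μ.real (A t ∩ Eᶜ) + μ.real (A t ∩ E)) := Finset.sum_le_sum fun t _ =>
        sdiff_eq (A t) E ▸
          measureReal_sdiff_preimage_le hε hE hθE (hA.measurableSet t) (hCν t) (hCA t)
    _ = ε * μ.real Eᶜ + μ.real E := by
        rw [Finset.sum_add_distrib, ← Finset.mul_sum, hA.sum_measureReal_inter μ hE.compl,
          hA.sum_measureReal_inter μ hE]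
    _ ≤ 2 * ε := by nlinarith [measureReal_le_one (μ := μ) (s := Eᶜ)]

theorem sum_measureReal_preimage_le_of_card_le [IsProbabilityMeasure μ] [IsProbabilityMeasure ν]
    (hε : 0 ≤ ε) (hE : MeasurableSet E) (hEμ : μ.real E ≤ ε)
    (hθE : ∀ A, MeasurableSet A → A ⊆ Eᶜ → μ.real A ≤ ν.real (θ.symm ⁻¹' A) + ε * μ.real A)
    {ι : Type*} [Fintype ι] {B : ι → Set X} (hB : ∀ i, MeasurableSet (B i)) {K : ℝ} (hK : 0 ≤ K)
    (hG : 1 - ε ≤ μ.real {x | ((Finset.univ.filter fun i => x ∈ B i).card : ℝ) ≤ K}) :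
    ∑ i, ν.real (θ.symm ⁻¹' B i) ≤ K + 3 * ε * Fintype.card ι := by
  set G := {x | ((Finset.univ.filter fun i => x ∈ B i).card : ℝ) ≤ K}
  have hGm : MeasurableSet (G ∩ Eᶜ) := (measurableSet_card_filter_le hB K).inter hE.compl
  have hGE : 1 - 2 * ε ≤ μ.real (G ∩ Eᶜ) := by
    have := measureReal_inter_add_sdiff (μ := μ) (s := G) hE.compl
    have : μ.real (G \ Eᶜ) ≤ μ.real E := measureReal_mono fun x hx => not_not.1 hx.2
    linarith
  have hH : 1 - 3 * ε ≤ ν.real (θ.symm ⁻¹' (G ∩ Eᶜ)) := by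
    have := hθE _ hGm inter_subset_right
    nlinarith [measureReal_le_one (μ := μ) (s := G ∩ Eᶜ)]
  have := sum_measureReal_le_of_card_le_on ν (fun i => θ.symm.measurable (hB i))
    (θ.symm.measurable hGm) hK fun y hy => hy.1
  rw [probReal_compl_eq_one_sub (θ.symm.measurable hGm)] at this
  nlinarith [(Fintype.card ι).cast_nonneg (α := ℝ)]

theorem sum_partDist_coordPartition_le [IsProbabilityMeasure μ] [IsProbabilityMeasure ν]
    {n N : ℕ} {α : Fin n → Fin N → Set X} {β : Fin n → Fin N → Set Y}
    (hα : ∀ i, IsMeasurablePartition (α i)) (hβ : ∀ i, IsMeasurablePartition (β i))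
    (hε : 0 ≤ ε) (hE : MeasurableSet E) (hEμ : μ.real E ≤ ε)
    (hθE : ∀ A, MeasurableSet A → A ⊆ Eᶜ → μ.real A ≤ ν.real (θ.symm ⁻¹' A) + ε * μ.real A)
    (hmatch : 1 - ε ≤ μ.real {x | ((Finset.univ.filter fun i =>
      ∀ j, x ∈ α i j → θ x ∉ β i j).card : ℝ) ≤ ε * n})
    {C : (Fin n → Fin N) → Set Y} (hC : IsMeasurablePartition C)
    (hCν : ∀ t, ν (C t) = μ (jointCell α t))
    (hCA : ∀ t, min (μ (jointCell α t)) (ν (θ.symm ⁻¹' jointCell α t)) ≤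
      ν (C t ∩ θ.symm ⁻¹' jointCell α t)) :
    ∑ i, partDist ν (coordPartition C i) (β i) ≤ 12 * ε * n := by
  set W := ⋃ t, C t \ θ.symm ⁻¹' jointCell α t
  set U := fun i => θ.symm ⁻¹' {x | ∀ j, x ∈ α i j → θ x ∉ β i j}
  have hA := isMeasurablePartition_jointCell hα
  have hB := measurableSet_mismatch (fun i => (hα i).measurableSet)
    (fun i => (hβ i).measurableSet) θ
  have hWm : MeasurableSet W :=
    .iUnion fun t => (hC.measurableSet t).diff (θ.symm.measurable (hA.measurableSet t))
  have hW : ν.real W ≤ 2 * ε := measureReal_iUnion_sdiff_preimage_le hε hE hEμ hθE hA hCν hCA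
  have hU : ∑ i, ν.real (U i) ≤ ε * n + 3 * ε * n := by
    have h := sum_measureReal_preimage_le_of_card_le hε hE hEμ hθE hB (K := ε * n)
      (by positivity) (by convert hmatch; exact Iff.rfl)
    rwa [Fintype.card_fin] at h
  calc ∑ i, partDist ν (coordPartition C i) (β i) ≤ ∑ i, 2 * (ν.real W + ν.real (U i)) :=
        Finset.sum_le_sum fun i _ => (partDist_le_two_mul_measureReal ν (hC.coordPartition i)
          (hβ i) (hWm.union (θ.symm.measurable (hB i)))
          (coordPartition_sdiff_subset (fun i => (hα i).pairwise_disjoint) θ i)).trans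
          (by gcongr; exact measureReal_union_le _ _)
    _ = 2 * n * ν.real W + 2 * ∑ i, ν.real (U i) := by
        rw [← Finset.mul_sum, Finset.sum_add_distrib]; simp; ring
    _ ≤ 12 * ε * n := by nlinarith [(n.cast_nonneg : (0 : ℝ) ≤ n)]

end Distances

theorem statement14_general {X Y : Type*} [MeasurableSpace X] [MeasurableSpace Y]
    [StandardBorelSpace Y]
    (μ : Measure X) (ν : Measure Y) [IsProbabilityMeasure μ] [IsProbabilityMeasure ν]
    [NullSingletonClass ν] {n N : ℕ}
    (α : Fin n → Fin N → Set X) (β : Fin n → Fin N → Set Y)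
    (hα : ∀ i, IsOrdPartition (α i)) (hβ : ∀ i, IsOrdPartition (β i))
    (θ : X ≃ᵐ Y) (ε : ℝ) (hθ : EpsMeasurePreserving μ ν θ ε)
    (hmatch : ENNReal.ofReal (1 - ε) ≤ μ {x : X |
      ((Finset.univ.filter fun i : Fin n =>
          ∀ j : Fin N, x ∈ α i j → θ x ∉ β i j).card : ℝ) ≤ ε * n}) :
    dbar μ ν α β ≤ 16 * ε := by
  have hε := hθ.pos
  obtain ⟨E, hE, hEμ, hθE⟩ := hθ.exists_measureReal_le
  have hα' := fun i => (hα i).isMeasurablePartition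
  have hA := isMeasurablePartition_jointCell hα'
  obtain ⟨C, hC, hCA⟩ := exists_partition_measure_eq_min_le_measure_inter ν
    (fun t => θ.symm.measurable (hA.measurableSet t))
    (fun t t' h => (hA.pairwise_disjoint h).preimage _) ((hA.sum_measure μ).trans measure_univ)
  have hsum := sum_partDist_coordPartition_le hα' (fun i => (hβ i).isMeasurablePartition) hε.le
    hE hEμ hθE ((ENNReal.ofReal_le_iff_le_toReal (measure_ne_top _ _)).1 hmatch) hC
    (fun t => (hCA t).1) (fun t => (hCA t).2)
  refine (dbar_le_of_sameDist (fun i => (hC.coordPartition i).isOrdPartition) fun t => ?_).trans ?_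
  · change μ (jointCell α t) = ν (jointCell (coordPartition C) t)
    rw [hC.jointCell_coordPartition, (hCA t).1]
  rcases Nat.eq_zero_or_pos n with rfl | hn
  · simp; linarith
  · have hn' : (0 : ℝ) < n := by exact_mod_cast hn
    rw [one_div, inv_mul_le_iff₀ hn']
    nlinarith

/-- Ornstein–Weiss. If an ε-measure-preserving invertible map θ
matches the partition indices except on an ε-fraction of indices, on a set of measure at
least 1-ε, then the d-bar distance of the two sequences of partitions is at most 16ε. -/
theorem statement14 {X Y : Type*} [MeasurableSpace X] [MeasurableSpace Y]
    [StandardBorelSpace X] [StandardBorelSpace Y]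
    (μ : Measure X) (ν : Measure Y) [IsProbabilityMeasure μ] [IsProbabilityMeasure ν]
    [NullSingletonClass μ] [NullSingletonClass ν] {n N : ℕ}
    (α : Fin n → Fin N → Set X) (β : Fin n → Fin N → Set Y)
    (hα : ∀ i, IsOrdPartition (α i)) (hβ : ∀ i, IsOrdPartition (β i))
    (θ : X ≃ᵐ Y) (ε : ℝ) (hθ : EpsMeasurePreserving μ ν θ ε)
    (hmatch : ENNReal.ofReal (1 - ε) ≤ μ {x : X |
      ((Finset.univ.filter fun i : Fin n =>
          ∀ j : Fin N, x ∈ α i j → θ x ∉ β i j).card : ℝ) ≤ ε * n}) :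
    dbar μ ν α β ≤ 16 * ε :=
  statement14_general μ ν α β hα hβ θ ε hθ hmatch
end
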